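/- arXiv:2602.23741 — 9 statements merged into one kernel-verified Lean document; each statement's English description precedes it below -/
import Mathlib

section
/- Let n = 2 or n = 3, let Z_1, Z_2 ∈ ℝ^n and d_1, d_2 ≥ 0, and set O(W) = |‖W − Z_1‖² − d_1²| + |‖W − Z_2‖² − d_2²|. If W ∈ ℝ^n satisfies ‖W − Z_1‖ ≤ d_1 and ‖W − Z_2‖ ≤ d_2 (i.e. W lies in the intersection of the two closed balls), then O(W) = d_1² + d_2² − ‖Z_1 − Z_2‖²/2 − 2‖W − (Z_1 + Z_2)/2‖². Consequently, on the intersection of the two closed balls, O is minimized exactly at the points of that region farthest from the midpoint (Z_1 + Z_2)/2. -/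
/-- For `n = 2` or `n = 3`, sensors `Z₁, Z₂ ∈ ℝⁿ` and `d₁, d₂ ≥ 0`, with
`O(W) = |‖W - Z₁‖² - d₁²| + |‖W - Z₂‖² - d₂²|`: if `W` lies in the intersection of the
two closed balls then `O(W) = d₁² + d₂² - ‖Z₁ - Z₂‖²/2 - 2‖W - (Z₁+Z₂)/2‖²`;
consequently, on the intersection of the two closed balls, `O` is minimized exactly at
the points of that region farthest from the midpoint `(Z₁+Z₂)/2`. -/
theorem squared_error_inside_both_balls
    (n : ℕ) (hn : n = 2 ∨ n = 3)
    (Z₁ Z₂ : EuclideanSpace ℝ (Fin n)) (d₁ d₂ : ℝ) (hd₁ : 0 ≤ d₁) (hd₂ : 0 ≤ d₂)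
    (O : EuclideanSpace ℝ (Fin n) → ℝ)
    (hO : ∀ W, O W = |‖W - Z₁‖ ^ 2 - d₁ ^ 2| + |‖W - Z₂‖ ^ 2 - d₂ ^ 2|)
    (Y₀ : EuclideanSpace ℝ (Fin n)) (hY₀ : Y₀ = ((1 : ℝ) / 2) • (Z₁ + Z₂))
    (A : Set (EuclideanSpace ℝ (Fin n)))
    (hA : A = {W | ‖W - Z₁‖ ≤ d₁ ∧ ‖W - Z₂‖ ≤ d₂}) :
    (∀ W ∈ A, O W = d₁ ^ 2 + d₂ ^ 2 - ‖Z₁ - Z₂‖ ^ 2 / 2 - 2 * ‖W - Y₀‖ ^ 2) ∧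
    (∀ W ∈ A, ((∀ V ∈ A, O W ≤ O V) ↔ (∀ V ∈ A, ‖V - Y₀‖ ≤ ‖W - Y₀‖))) := by
  subst hA hY₀
  have key : ∀ W ∈ {W : EuclideanSpace ℝ (Fin n) | ‖W - Z₁‖ ≤ d₁ ∧ ‖W - Z₂‖ ≤ d₂},
      O W = d₁ ^ 2 + d₂ ^ 2 - ‖Z₁ - Z₂‖ ^ 2 / 2
        - 2 * ‖W - ((1 : ℝ) / 2) • (Z₁ + Z₂)‖ ^ 2 := by
    intro W hW
    obtain ⟨h1, h2⟩ := hW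
    have h1' : ‖W - Z₁‖ ^ 2 ≤ d₁ ^ 2 := by
      have := pow_le_pow_left₀ (norm_nonneg _) h1 2
      linarith
    have h2' : ‖W - Z₂‖ ^ 2 ≤ d₂ ^ 2 := by
      have := pow_le_pow_left₀ (norm_nonneg _) h2 2
      linarith
    have hpar := parallelogram_law_with_norm ℝ (W - Z₁) (W - Z₂)
    have e1 : (W - Z₁) + (W - Z₂) = (2 : ℝ) • (W - ((1 : ℝ) / 2) • (Z₁ + Z₂)) := by
      module
    have e2 : (W - Z₁) - (W - Z₂) = Z₂ - Z₁ := by abel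
    rw [e1, e2, norm_smul] at hpar
    have e3 : ‖Z₂ - Z₁‖ = ‖Z₁ - Z₂‖ := by rw [norm_sub_rev]
    rw [e3] at hpar
    simp only [Real.norm_ofNat] at hpar
    rw [hO W, abs_of_nonpos (by linarith), abs_of_nonpos (by linarith)]
    nlinarith [hpar]
  refine ⟨key, ?_⟩
  intro W hW
  constructor
  · intro h V hV
    have hh := h V hV
    rw [key W hW, key V hV] at hh
    have hsq : ‖V - ((1 : ℝ) / 2) • (Z₁ + Z₂)‖ ^ 2 ≤ ‖W - ((1 : ℝ) / 2) • (Z₁ + Z₂)‖ ^ 2 := by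
      linarith
    exact (pow_le_pow_iff_left₀ (norm_nonneg _) (norm_nonneg _) two_ne_zero).mp hsq
  · intro h V hV
    have hh := h V hV
    rw [key W hW, key V hV]
    nlinarith [norm_nonneg (V - ((1 : ℝ) / 2) • (Z₁ + Z₂)),
      norm_nonneg (W - ((1 : ℝ) / 2) • (Z₁ + Z₂))]
end

section
/- Let n = 2 or n = 3, let Z_1, Z_2 ∈ ℝ^n with Z_1 ≠ Z_2, and let d_1 ≥ d_2 ≥ 0. If d_1 ≤ ‖Z_2 − Z_1‖/2, then the set of global minimizers of the squared-distance-error objective O(W) = |‖W − Z_1‖² − d_1²| + |‖W − Z_2‖² − d_2²| is exactly the single point (Z_1 + Z_2)/2. -/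
/-- Two measurements, squared distance error, case (a): if `d₁ ≤ ‖Z₂ - Z₁‖ / 2` then
the set of global minimizers of `O(W) = |‖W - Z₁‖² - d₁²| + |‖W - Z₂‖² - d₂²|` is
exactly the single point `(Z₁ + Z₂)/2`. -/
theorem two_meas_squared_error_case_a
    (n : ℕ) (hn : n = 2 ∨ n = 3)
    (Z₁ Z₂ : EuclideanSpace ℝ (Fin n)) (hZ : Z₁ ≠ Z₂)
    (d₁ d₂ : ℝ) (hd₂ : 0 ≤ d₂) (hd : d₂ ≤ d₁)
    (O : EuclideanSpace ℝ (Fin n) → ℝ)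
    (hO : ∀ W, O W = |‖W - Z₁‖ ^ 2 - d₁ ^ 2| + |‖W - Z₂‖ ^ 2 - d₂ ^ 2|)
    (hcase : d₁ ≤ ‖Z₂ - Z₁‖ / 2) :
    {W : EuclideanSpace ℝ (Fin n) | ∀ V, O W ≤ O V} = {((1 : ℝ) / 2) • (Z₁ + Z₂)} := by
  classical
  set L := ‖Z₂ - Z₁‖ with hLdef
  have hL0 : 0 ≤ L := norm_nonneg _
  set M : EuclideanSpace ℝ (Fin n) := ((1 : ℝ) / 2) • (Z₁ + Z₂) with hMdef
  have hpar : ∀ W : EuclideanSpace ℝ (Fin n),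
      ‖W - Z₁‖ ^ 2 + ‖W - Z₂‖ ^ 2 = 2 * ‖W - M‖ ^ 2 + L ^ 2 / 2 := by
    intro W
    have h := parallelogram_law_with_norm ℝ (W - Z₁) (W - Z₂)
    have h1 : (W - Z₁) + (W - Z₂) = (2 : ℝ) • (W - M) := by
      rw [hMdef]; module
    have h2 : (W - Z₁) - (W - Z₂) = Z₂ - Z₁ := by abel
    rw [h1, h2, norm_smul] at h
    simp only [Real.norm_ofNat] at h
    nlinarith [h]
  have hM1 : ‖M - Z₁‖ ^ 2 = L ^ 2 / 4 := by
    have : M - Z₁ = ((1 : ℝ) / 2) • (Z₂ - Z₁) := by rw [hMdef]; module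
    rw [this, norm_smul, show ‖(1:ℝ)/2‖ = 1/2 by norm_num]
    ring
  have hM2 : ‖M - Z₂‖ ^ 2 = L ^ 2 / 4 := by
    have : M - Z₂ = (-(1 : ℝ) / 2) • (Z₂ - Z₁) := by rw [hMdef]; module
    rw [this, norm_smul]
    rw [show ‖(-(1:ℝ)/2)‖ = 1/2 by norm_num]
    ring
  have hd1 : 0 ≤ d₁ := le_trans hd₂ hd
  have hd1sq : d₁ ^ 2 ≤ L ^ 2 / 4 := by nlinarith
  have hd2sq : d₂ ^ 2 ≤ L ^ 2 / 4 := by nlinarith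
  have hOM : O M = L ^ 2 / 2 - d₁ ^ 2 - d₂ ^ 2 := by
    rw [hO, hM1, hM2, abs_of_nonneg (by linarith), abs_of_nonneg (by linarith)]
    ring
  have hlow : ∀ V, 2 * ‖V - M‖ ^ 2 + L ^ 2 / 2 - d₁ ^ 2 - d₂ ^ 2 ≤ O V := by
    intro V
    rw [hO]
    have ha := le_abs_self (‖V - Z₁‖ ^ 2 - d₁ ^ 2)
    have hb := le_abs_self (‖V - Z₂‖ ^ 2 - d₂ ^ 2)
    have := hpar V
    linarith
  ext W
  simp only [Set.mem_setOf_eq, Set.mem_singleton_iff]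
  constructor
  · intro h
    have h1 := h M
    rw [hOM] at h1
    have h2 := hlow W
    have h3 : ‖W - M‖ ^ 2 ≤ 0 := by linarith
    have h4 : ‖W - M‖ = 0 := by nlinarith [norm_nonneg (W - M), sq_nonneg ‖W - M‖]
    have := norm_eq_zero.mp h4
    rw [sub_eq_zero] at this
    exact this
  · intro h
    subst h
    intro V
    rw [hOM]
    have := hlow V
    nlinarith [sq_nonneg ‖V - M‖]
end

section
/- Let n = 2 or n = 3, let Z_1, Z_2 ∈ ℝ^n with Z_1 ≠ Z_2, and let d_1 ≥ d_2 ≥ 0. If ‖Z_2 − Z_1‖/2 ≤ d_1 < ‖Z_2 − Z_1‖ and d_1 + d_2 ≤ ‖Z_2 − Z_1‖, then the set of global minimizers of the squared-distance-error objective O(W) = |‖W − Z_1‖² − d_1²| + |‖W − Z_2‖² − d_2²| is exactly the single point N_1 = Z_1 + d_1 (Z_2 − Z_1)/‖Z_2 − Z_1‖. -/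
/-!
Write `D = dist Z₁ Z₂`, `a = dist W Z₁`, `b = dist W Z₂`, so that `D ≤ a + b`. Then
`O W ≥ |a² - d₁²| + b² - d₂² ≥ (D - d₁)² - d₂²`: for `a ≤ d₁` the middle term exceeds the bound
by at least `2D (d₁ - a)`, for `d₁ < a ≤ D` by `2 (a - d₁)(a + d₁ - D)`, which is where
`D / 2 ≤ d₁` enters, and for `a > D` already `a² - d₁² > (D - d₁)²`. Equality forces `a = d₁`
and `b = D - d₁`, and `N₁` attains the bound because `d₂ ≤ D - d₁`. By strict convexity `N₁` is
the only point at distances `d₁` and `D - d₁` from the two sensors.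
-/

open AffineMap

section Real

variable {D d₁ a b : ℝ}

theorem sq_sub_le_abs_sq_sub_sq_add_sq (h₁ : D / 2 ≤ d₁) (h₂ : d₁ < D) (ha : 0 ≤ a)
    (hab : D ≤ a + b) : (D - d₁) ^ 2 ≤ |a ^ 2 - d₁ ^ 2| + b ^ 2 := by
  rcases le_or_gt a D with haD | hDa
  · have hb : (D - a) ^ 2 ≤ b ^ 2 := by nlinarith
    rcases le_or_gt a d₁ with had | hda
    · nlinarith [neg_le_abs (a ^ 2 - d₁ ^ 2)]
    · nlinarith [le_abs_self (a ^ 2 - d₁ ^ 2), mul_nonneg (sub_nonneg.2 hda.le)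
        (by linarith : (0 : ℝ) ≤ a + d₁ - D)]
  · nlinarith [le_abs_self (a ^ 2 - d₁ ^ 2), mul_pos (by linarith : (0 : ℝ) < d₁) (sub_pos.2 h₂)]

theorem eq_of_abs_sq_sub_sq_add_sq_le (h₁ : D / 2 ≤ d₁) (h₂ : d₁ < D) (ha : 0 ≤ a)
    (hb : 0 ≤ b) (hab : D ≤ a + b) (hle : |a ^ 2 - d₁ ^ 2| + b ^ 2 ≤ (D - d₁) ^ 2) :
    a = d₁ ∧ b = D - d₁ := by
  have had : a = d₁ := by
    by_contra hne
    rcases le_or_gt a D with haD | hDa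
    · have hb : (D - a) ^ 2 ≤ b ^ 2 := by nlinarith
      rcases lt_or_gt_of_ne hne with had | hda
      · nlinarith [neg_le_abs (a ^ 2 - d₁ ^ 2)]
      · nlinarith [le_abs_self (a ^ 2 - d₁ ^ 2), mul_pos (sub_pos.2 hda)
          (by linarith : (0 : ℝ) < a + d₁ - D)]
    · nlinarith [le_abs_self (a ^ 2 - d₁ ^ 2), mul_pos (by linarith : (0 : ℝ) < d₁) (sub_pos.2 h₂)]
  subst had
  refine ⟨rfl, ?_⟩
  rw [sub_self, abs_zero, zero_add] at hle
  nlinarith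

end Real

def squaredDistError {P : Type*} [PseudoMetricSpace P] (Z₁ Z₂ : P) (d₁ d₂ : ℝ) (W : P) : ℝ :=
  |dist W Z₁ ^ 2 - d₁ ^ 2| + |dist W Z₂ ^ 2 - d₂ ^ 2|

section Metric

variable {P : Type*} [PseudoMetricSpace P] {Z₁ Z₂ : P} {d₁ d₂ : ℝ}

theorem sq_sub_sq_le_squaredDistError (h₁ : dist Z₁ Z₂ / 2 ≤ d₁) (h₂ : d₁ < dist Z₁ Z₂)
    (W : P) : (dist Z₁ Z₂ - d₁) ^ 2 - d₂ ^ 2 ≤ squaredDistError Z₁ Z₂ d₁ d₂ W := by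
  have := sq_sub_le_abs_sq_sub_sq_add_sq h₁ h₂ dist_nonneg (dist_triangle_left Z₁ Z₂ W)
  unfold squaredDistError
  linarith [le_abs_self (dist W Z₂ ^ 2 - d₂ ^ 2)]

end Metric

section Affine

variable {V P : Type*} [NormedAddCommGroup V] [NormedSpace ℝ V] [MetricSpace P]
  [NormedAddTorsor V P] {Z₁ Z₂ : P} {d₁ d₂ : ℝ}

theorem squaredDistError_lineMap (hZ : Z₁ ≠ Z₂) (hd₁ : 0 ≤ d₁) (hd₂ : 0 ≤ d₂)
    (hsum : d₁ + d₂ ≤ dist Z₁ Z₂) :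
    squaredDistError Z₁ Z₂ d₁ d₂ (lineMap Z₁ Z₂ (d₁ / dist Z₁ Z₂)) =
      (dist Z₁ Z₂ - d₁) ^ 2 - d₂ ^ 2 := by
  have hD : 0 < dist Z₁ Z₂ := dist_pos.2 hZ
  have hc : d₁ / dist Z₁ Z₂ ≤ 1 := (div_le_one hD).2 (by linarith)
  rw [squaredDistError, dist_lineMap_left, dist_lineMap_right, Real.norm_of_nonneg (by positivity),
    Real.norm_of_nonneg (sub_nonneg.2 hc), div_mul_cancel₀ _ hD.ne', sub_mul, one_mul,
    div_mul_cancel₀ _ hD.ne', sub_self, abs_zero, zero_add, abs_of_nonneg]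
  nlinarith

theorem eq_lineMap_of_squaredDistError_le [StrictConvexSpace ℝ V] {W : P}
    (h₁ : dist Z₁ Z₂ / 2 ≤ d₁) (h₂ : d₁ < dist Z₁ Z₂)
    (hle : squaredDistError Z₁ Z₂ d₁ d₂ W ≤ (dist Z₁ Z₂ - d₁) ^ 2 - d₂ ^ 2) :
    W = lineMap Z₁ Z₂ (d₁ / dist Z₁ Z₂) := by
  have hD : 0 < dist Z₁ Z₂ := by linarith
  obtain ⟨h₁W, hW₂⟩ := eq_of_abs_sq_sub_sq_add_sq_le h₁ h₂ dist_nonneg dist_nonneg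
    (dist_triangle_left Z₁ Z₂ W)
    (by unfold squaredDistError at hle; linarith [le_abs_self (dist W Z₂ ^ 2 - d₂ ^ 2)])
  apply eq_lineMap_of_dist_eq_mul_of_dist_eq_mul
  · rw [dist_comm, h₁W, div_mul_cancel₀ _ hD.ne']
  · rw [hW₂, sub_mul, one_mul, div_mul_cancel₀ _ hD.ne']

theorem setOf_forall_squaredDistError_le_eq_singleton [StrictConvexSpace ℝ V]
    (h₁ : dist Z₁ Z₂ / 2 ≤ d₁) (h₂ : d₁ < dist Z₁ Z₂) (hd₂ : 0 ≤ d₂)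
    (hsum : d₁ + d₂ ≤ dist Z₁ Z₂) :
    {W | ∀ X, squaredDistError Z₁ Z₂ d₁ d₂ W ≤ squaredDistError Z₁ Z₂ d₁ d₂ X} =
      {lineMap Z₁ Z₂ (d₁ / dist Z₁ Z₂)} := by
  have hZ : Z₁ ≠ Z₂ := dist_pos.1 (by linarith)
  have hmin := squaredDistError_lineMap (d₂ := d₂) hZ (by linarith) hd₂ hsum
  ext W
  refine ⟨fun hW ↦ eq_lineMap_of_squaredDistError_le h₁ h₂ (hmin ▸ hW _), ?_⟩
  rintro rfl X
  exact hmin ▸ sq_sub_sq_le_squaredDistError h₁ h₂ X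

end Affine

theorem two_meas_squared_error_case_b_general
    (n : ℕ)
    (Z₁ Z₂ : EuclideanSpace ℝ (Fin n))
    (d₁ d₂ : ℝ) (hd₂ : 0 ≤ d₂)
    (O : EuclideanSpace ℝ (Fin n) → ℝ)
    (hO : ∀ W, O W = |‖W - Z₁‖ ^ 2 - d₁ ^ 2| + |‖W - Z₂‖ ^ 2 - d₂ ^ 2|)
    (hcase₁ : ‖Z₂ - Z₁‖ / 2 ≤ d₁) (hcase₂ : d₁ < ‖Z₂ - Z₁‖)
    (hcase₃ : d₁ + d₂ ≤ ‖Z₂ - Z₁‖) :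
    {W : EuclideanSpace ℝ (Fin n) | ∀ V, O W ≤ O V}
      = {Z₁ + (d₁ / ‖Z₂ - Z₁‖) • (Z₂ - Z₁)} := by
  have hO_eq : O = squaredDistError Z₁ Z₂ d₁ d₂ := funext fun W ↦ by
    simp only [hO, squaredDistError, dist_eq_norm]
  rw [← dist_eq_norm'] at hcase₁ hcase₂ hcase₃ ⊢
  rw [hO_eq, add_comm, ← lineMap_apply_module']
  exact setOf_forall_squaredDistError_le_eq_singleton hcase₁ hcase₂ hd₂ hcase₃

/-- Two measurements, squared distance error, case (b): if
`‖Z₂ - Z₁‖ / 2 ≤ d₁ < ‖Z₂ - Z₁‖` and `d₁ + d₂ ≤ ‖Z₂ - Z₁‖`, then the set of global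
minimizers of `O(W) = |‖W - Z₁‖² - d₁²| + |‖W - Z₂‖² - d₂²|` is exactly the single
point `N₁ = Z₁ + d₁ (Z₂ - Z₁)/‖Z₂ - Z₁‖`. -/
theorem two_meas_squared_error_case_b
    (n : ℕ) (hn : n = 2 ∨ n = 3)
    (Z₁ Z₂ : EuclideanSpace ℝ (Fin n)) (hZ : Z₁ ≠ Z₂)
    (d₁ d₂ : ℝ) (hd₂ : 0 ≤ d₂) (hd : d₂ ≤ d₁)
    (O : EuclideanSpace ℝ (Fin n) → ℝ)
    (hO : ∀ W, O W = |‖W - Z₁‖ ^ 2 - d₁ ^ 2| + |‖W - Z₂‖ ^ 2 - d₂ ^ 2|)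
    (hcase₁ : ‖Z₂ - Z₁‖ / 2 ≤ d₁) (hcase₂ : d₁ < ‖Z₂ - Z₁‖)
    (hcase₃ : d₁ + d₂ ≤ ‖Z₂ - Z₁‖) :
    {W : EuclideanSpace ℝ (Fin n) | ∀ V, O W ≤ O V}
      = {Z₁ + (d₁ / ‖Z₂ - Z₁‖) • (Z₂ - Z₁)} :=
  two_meas_squared_error_case_b_general n Z₁ Z₂ d₁ d₂ hd₂ O hO hcase₁ hcase₂ hcase₃
end

section
/- Let n = 2 or n = 3, let Z_1, Z_2 ∈ ℝ^n with Z_1 ≠ Z_2, and let d_1 ≥ d_2 ≥ 0. If d_1 − d_2 < ‖Z_2 − Z_1‖ < d_1 + d_2, then the set of global minimizers of the squared-distance-error objective O(W) = |‖W − Z_1‖² − d_1²| + |‖W − Z_2‖² − d_2²| is exactly the intersection of the two spheres, {W : ‖W − Z_1‖ = d_1 and ‖W − Z_2‖ = d_2}. -/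
open scoped RealInnerProductSpace

lemma exists_sphere_inter
    (n : ℕ) (hn : 2 ≤ n)
    (Z₁ Z₂ : EuclideanSpace ℝ (Fin n)) (hZ : Z₁ ≠ Z₂)
    (d₁ d₂ : ℝ) (hd₂ : 0 ≤ d₂) (hd : d₂ ≤ d₁)
    (hcase₁ : d₁ - d₂ < ‖Z₂ - Z₁‖) (hcase₂ : ‖Z₂ - Z₁‖ < d₁ + d₂) :
    ∃ W : EuclideanSpace ℝ (Fin n), ‖W - Z₁‖ = d₁ ∧ ‖W - Z₂‖ = d₂ := by
  set D := ‖Z₂ - Z₁‖ with hDdef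
  have hD : 0 < D := norm_pos_iff.mpr (sub_ne_zero.mpr hZ.symm)
  set u : EuclideanSpace ℝ (Fin n) := D⁻¹ • (Z₂ - Z₁) with hu_def
  have hu : ‖u‖ = 1 := by
    rw [hu_def, norm_smul, norm_inv, norm_norm, ← hDdef, inv_mul_cancel₀ hD.ne']
  have hu0 : u ≠ 0 := by
    intro h; rw [h, norm_zero] at hu; norm_num at hu
  -- find a unit vector orthogonal to u
  have hbot : (ℝ ∙ u)ᗮ ≠ ⊥ := by
    intro h
    have h1 : Module.finrank ℝ (ℝ ∙ u) = 1 := finrank_span_singleton hu0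
    have h2 := (ℝ ∙ u).finrank_add_finrank_orthogonal
    rw [h, h1, finrank_euclideanSpace_fin, finrank_bot] at h2
    omega
  obtain ⟨v, hv_mem, hv0⟩ := Submodule.exists_mem_ne_zero_of_ne_bot hbot
  set w : EuclideanSpace ℝ (Fin n) := ‖v‖⁻¹ • v with hw_def
  have hvnorm : 0 < ‖v‖ := norm_pos_iff.mpr hv0
  have hw : ‖w‖ = 1 := by
    rw [hw_def, norm_smul, norm_inv, norm_norm, inv_mul_cancel₀ hvnorm.ne']
  have huv : ⟪u, v⟫ = 0 :=
    Submodule.mem_orthogonal_singleton_iff_inner_right.mp hv_mem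
  have huw : ⟪u, w⟫ = 0 := by
    rw [hw_def, real_inner_smul_right, huv, mul_zero]
  have hZ2 : Z₂ = Z₁ + D • u := by
    rw [hu_def, smul_smul, mul_inv_cancel₀ hD.ne', one_smul]; abel
  clear_value u w D
  set t : ℝ := (D ^ 2 + d₁ ^ 2 - d₂ ^ 2) / (2 * D) with ht_def
  have h2tD : t * (2 * D) = D ^ 2 + d₁ ^ 2 - d₂ ^ 2 := by
    rw [ht_def]; field_simp
  have hs2 : 0 ≤ d₁ ^ 2 - t ^ 2 := by
    have key : d₁ ^ 2 - t ^ 2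
        = ((d₁ + d₂) ^ 2 - D ^ 2) * (D ^ 2 - (d₁ - d₂) ^ 2) / (4 * D ^ 2) := by
      rw [ht_def]; field_simp; ring
    rw [key]
    apply div_nonneg _ (by positivity)
    have h1 : 0 < (d₁ + d₂) ^ 2 - D ^ 2 := by nlinarith
    have h2 : 0 < D ^ 2 - (d₁ - d₂) ^ 2 := by nlinarith
    positivity
  set s : ℝ := Real.sqrt (d₁ ^ 2 - t ^ 2) with hs_def
  have hs : s ^ 2 = d₁ ^ 2 - t ^ 2 := Real.sq_sqrt hs2
  clear_value t s
  refine ⟨Z₁ + t • u + s • w, ?_, ?_⟩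
  · have he : Z₁ + t • u + s • w - Z₁ = t • u + s • w := by abel
    have hsq : ‖t • u + s • w‖ ^ 2 = d₁ ^ 2 := by
      rw [norm_add_sq_real, norm_smul, norm_smul, hu, hw, real_inner_smul_left,
        real_inner_smul_right, huw]
      simp [abs_sq, sq_abs]
      nlinarith
    rw [he]
    have hd₁ : 0 ≤ d₁ := le_trans hd₂ hd
    exact (pow_left_inj₀ (norm_nonneg _) hd₁ two_ne_zero).mp hsq
  · have he : Z₁ + t • u + s • w - Z₂ = (t - D) • u + s • w := by
      rw [hZ2, sub_smul]; abel
    have hsq : ‖(t - D) • u + s • w‖ ^ 2 = d₂ ^ 2 := by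
      rw [norm_add_sq_real, norm_smul, norm_smul, hu, hw, real_inner_smul_left,
        real_inner_smul_right, huw]
      simp [sq_abs]
      linear_combination hs - h2tD
    rw [he]
    exact (pow_left_inj₀ (norm_nonneg _) hd₂ two_ne_zero).mp hsq

/-- Two measurements, squared distance error, case (c): if
`d₁ - d₂ < ‖Z₂ - Z₁‖ < d₁ + d₂`, then the set of global minimizers of
`O(W) = |‖W - Z₁‖² - d₁²| + |‖W - Z₂‖² - d₂²|` is exactly the intersection of the two
spheres `{W : ‖W - Z₁‖ = d₁ ∧ ‖W - Z₂‖ = d₂}`. -/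
theorem two_meas_squared_error_case_c
    (n : ℕ) (hn : n = 2 ∨ n = 3)
    (Z₁ Z₂ : EuclideanSpace ℝ (Fin n)) (hZ : Z₁ ≠ Z₂)
    (d₁ d₂ : ℝ) (hd₂ : 0 ≤ d₂) (hd : d₂ ≤ d₁)
    (O : EuclideanSpace ℝ (Fin n) → ℝ)
    (hO : ∀ W, O W = |‖W - Z₁‖ ^ 2 - d₁ ^ 2| + |‖W - Z₂‖ ^ 2 - d₂ ^ 2|)
    (hcase₁ : d₁ - d₂ < ‖Z₂ - Z₁‖) (hcase₂ : ‖Z₂ - Z₁‖ < d₁ + d₂) :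
    {W : EuclideanSpace ℝ (Fin n) | ∀ V, O W ≤ O V}
      = {W : EuclideanSpace ℝ (Fin n) | ‖W - Z₁‖ = d₁ ∧ ‖W - Z₂‖ = d₂} := by
  have hn2 : 2 ≤ n := by omega
  obtain ⟨W₀, hW₀1, hW₀2⟩ :=
    exists_sphere_inter n hn2 Z₁ Z₂ hZ d₁ d₂ hd₂ hd hcase₁ hcase₂
  have hO0 : O W₀ = 0 := by
    rw [hO, hW₀1, hW₀2]; simp
  have hOnn : ∀ V, 0 ≤ O V := by
    intro V; rw [hO]; positivity
  ext W
  simp only [Set.mem_setOf_eq]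
  constructor
  · intro h
    have hle : O W ≤ 0 := hO0 ▸ h W₀
    have heq : O W = 0 := le_antisymm hle (hOnn W)
    rw [hO] at heq
    have h1 : |‖W - Z₁‖ ^ 2 - d₁ ^ 2| = 0 := by
      have := abs_nonneg (‖W - Z₁‖ ^ 2 - d₁ ^ 2)
      have := abs_nonneg (‖W - Z₂‖ ^ 2 - d₂ ^ 2)
      linarith
    have h2 : |‖W - Z₂‖ ^ 2 - d₂ ^ 2| = 0 := by
      have := abs_nonneg (‖W - Z₁‖ ^ 2 - d₁ ^ 2)
      linarith
    rw [abs_eq_zero, sub_eq_zero] at h1 h2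
    exact ⟨(pow_left_inj₀ (norm_nonneg _) (le_trans hd₂ hd) two_ne_zero).mp h1,
      (pow_left_inj₀ (norm_nonneg _) hd₂ two_ne_zero).mp h2⟩
  · rintro ⟨h1, h2⟩ V
    have : O W = 0 := by rw [hO, h1, h2]; simp
    rw [this]; exact hOnn V
end

section
/- Let n = 2 or n = 3, let Z_1, Z_2 ∈ ℝ^n with Z_1 ≠ Z_2, and let d_1 ≥ d_2 ≥ 0. If d_1 − d_2 ≥ ‖Z_2 − Z_1‖, then the set of global minimizers of the squared-distance-error objective O(W) = |‖W − Z_1‖² − d_1²| + |‖W − Z_2‖² − d_2²| is exactly the single point N_1 = Z_1 + d_1 (Z_2 − Z_1)/‖Z_2 − Z_1‖. -/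
/-! Write `r = ‖Z₂ - Z₁‖`, `a = ‖W - Z₁‖`, `b = ‖W - Z₂‖`. The triangle inequality `a ≤ b + r`
alone forces `|a² - d₁²| + |b² - d₂²| ≥ (d₁ - r)² - d₂²`, with equality only for `a = d₁` and
`b = d₁ - r`. The point `N₁` attains this bound; conversely, equality `a = b + r` in the triangle
inequality puts `W` on the ray from `Z₁` through `Z₂` (strict convexity), at distance `d₁`
from `Z₁`, so `W = N₁`. -/

theorem sq_sub_sq_le_abs_add_abs {a b r d₁ d₂ : ℝ} (ha : 0 ≤ a) (hr : 0 ≤ r)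
    (hd₂ : 0 ≤ d₂) (hd : d₂ + r ≤ d₁) (hab : a ≤ b + r) :
    (d₁ - r) ^ 2 - d₂ ^ 2 ≤ |a ^ 2 - d₁ ^ 2| + |b ^ 2 - d₂ ^ 2| := by
  have h₂ := le_abs_self (b ^ 2 - d₂ ^ 2)
  rcases le_total r a with hra | har
  · have hb' : (a - r) ^ 2 ≤ b ^ 2 := pow_le_pow_left₀ (by linarith) (by linarith) 2
    rcases le_total a d₁ with had | hda
    · nlinarith [neg_abs_le (a ^ 2 - d₁ ^ 2), mul_nonneg hr (sub_nonneg.2 had)]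
    · nlinarith [le_abs_self (a ^ 2 - d₁ ^ 2),
        mul_nonneg (sub_nonneg.2 hda) (by linarith : 0 ≤ a + d₁ - r)]
  · nlinarith [neg_abs_le (a ^ 2 - d₁ ^ 2), mul_le_mul har har ha (by linarith)]

theorem eq_of_abs_add_abs_le {a b r d₁ d₂ : ℝ} (ha : 0 ≤ a) (hb : 0 ≤ b) (hr : 0 < r)
    (hd₂ : 0 ≤ d₂) (hd : d₂ + r ≤ d₁) (hab : a ≤ b + r)
    (h : |a ^ 2 - d₁ ^ 2| + |b ^ 2 - d₂ ^ 2| ≤ (d₁ - r) ^ 2 - d₂ ^ 2) :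
    a = d₁ ∧ b = d₁ - r := by
  have h₂ := le_abs_self (b ^ 2 - d₂ ^ 2)
  have hle : a ≤ d₁ := by
    by_contra! hlt
    have hb' : (a - r) ^ 2 ≤ b ^ 2 := pow_le_pow_left₀ (by linarith) (by linarith) 2
    nlinarith [le_abs_self (a ^ 2 - d₁ ^ 2),
      mul_pos (sub_pos.2 hlt) (by linarith : 0 < a + d₁ - r)]
  have hge : d₁ ≤ a := by
    by_contra! hlt
    rcases le_or_gt r a with hra | har
    · have hb' : (a - r) ^ 2 ≤ b ^ 2 := pow_le_pow_left₀ (by linarith) (by linarith) 2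
      nlinarith [neg_abs_le (a ^ 2 - d₁ ^ 2), mul_pos hr (sub_pos.2 hlt)]
    · nlinarith [neg_abs_le (a ^ 2 - d₁ ^ 2), mul_lt_mul'' har har ha ha]
  obtain rfl : a = d₁ := le_antisymm hle hge
  rw [sub_self, abs_zero, zero_add] at h
  have hb' : b ^ 2 ≤ (a - r) ^ 2 := by linarith
  exact ⟨rfl, le_antisymm ((pow_le_pow_iff_left₀ hb (by linarith) two_ne_zero).1 hb') (by linarith)⟩

section

variable {E : Type*} [NormedAddCommGroup E]

def sqDistError (Z₁ Z₂ : E) (d₁ d₂ : ℝ) (W : E) : ℝ :=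
  |‖W - Z₁‖ ^ 2 - d₁ ^ 2| + |‖W - Z₂‖ ^ 2 - d₂ ^ 2|

variable {Z₁ Z₂ : E} {d₁ d₂ : ℝ}

theorem sqDistError_ge (hd₂ : 0 ≤ d₂) (hd : ‖Z₂ - Z₁‖ ≤ d₁ - d₂) (W : E) :
    (d₁ - ‖Z₂ - Z₁‖) ^ 2 - d₂ ^ 2 ≤ sqDistError Z₁ Z₂ d₁ d₂ W :=
  sq_sub_sq_le_abs_add_abs (norm_nonneg _) (norm_nonneg _) hd₂ (by linarith)
    (norm_sub_le_norm_sub_add_norm_sub _ _ _)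

variable [NormedSpace ℝ E]

theorem norm_div_norm_smul {v : E} (hv : v ≠ 0) {d : ℝ} (hd : 0 ≤ d) : ‖(d / ‖v‖) • v‖ = d := by
  rw [norm_smul, Real.norm_of_nonneg (by positivity), div_mul_cancel₀ _ (norm_ne_zero_iff.2 hv)]

theorem eq_add_div_norm_smul_of_norm_sub_eq [StrictConvexSpace ℝ E] {W : E} (hZ : Z₁ ≠ Z₂)
    (h : ‖W - Z₁‖ = ‖W - Z₂‖ + ‖Z₂ - Z₁‖) :
    W = Z₁ + (‖W - Z₁‖ / ‖Z₂ - Z₁‖) • (Z₂ - Z₁) := by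
  have hray : SameRay ℝ (W - Z₂) (Z₂ - Z₁) := by
    rwa [sameRay_iff_norm_add, sub_add_sub_cancel]
  have hray' : SameRay ℝ (W - Z₁) (Z₂ - Z₁) := by
    simpa only [sub_add_sub_cancel] using hray.add_left (SameRay.refl _)
  rw [div_eq_inv_mul, mul_smul, hray'.norm_smul_eq,
    inv_smul_smul₀ (norm_ne_zero_iff.2 (sub_ne_zero.2 hZ.symm)), add_sub_cancel]

theorem sqDistError_add_div_norm_smul (hZ : Z₁ ≠ Z₂) (hd₂ : 0 ≤ d₂) (hd : ‖Z₂ - Z₁‖ ≤ d₁ - d₂) :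
    sqDistError Z₁ Z₂ d₁ d₂ (Z₁ + (d₁ / ‖Z₂ - Z₁‖) • (Z₂ - Z₁)) =
      (d₁ - ‖Z₂ - Z₁‖) ^ 2 - d₂ ^ 2 := by
  have hv : Z₂ - Z₁ ≠ 0 := sub_ne_zero.2 hZ.symm
  have hN₂ : Z₁ + (d₁ / ‖Z₂ - Z₁‖) • (Z₂ - Z₁) - Z₂ =
      ((d₁ - ‖Z₂ - Z₁‖) / ‖Z₂ - Z₁‖) • (Z₂ - Z₁) := by
    rw [sub_div, div_self (norm_ne_zero_iff.2 hv), sub_smul, one_smul]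
    abel
  rw [sqDistError, add_sub_cancel_left, hN₂,
    norm_div_norm_smul hv (by linarith [norm_nonneg (Z₂ - Z₁)]),
    norm_div_norm_smul hv (by linarith), sub_self, abs_zero, zero_add,
    abs_of_nonneg (sub_nonneg.2 (pow_le_pow_left₀ hd₂ (by linarith) 2))]

theorem eq_of_sqDistError_le [StrictConvexSpace ℝ E] (hZ : Z₁ ≠ Z₂) (hd₂ : 0 ≤ d₂)
    (hd : ‖Z₂ - Z₁‖ ≤ d₁ - d₂) {W : E}
    (hW : sqDistError Z₁ Z₂ d₁ d₂ W ≤ (d₁ - ‖Z₂ - Z₁‖) ^ 2 - d₂ ^ 2) :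
    W = Z₁ + (d₁ / ‖Z₂ - Z₁‖) • (Z₂ - Z₁) := by
  obtain ⟨hW₁, hW₂⟩ := eq_of_abs_add_abs_le (norm_nonneg _) (norm_nonneg _)
    (norm_pos_iff.2 (sub_ne_zero.2 hZ.symm)) hd₂ (by linarith)
    (norm_sub_le_norm_sub_add_norm_sub W Z₂ Z₁) hW
  rw [← hW₁]
  exact eq_add_div_norm_smul_of_norm_sub_eq hZ (by linarith)

end

theorem two_meas_squared_error_case_d_general
    (n : ℕ)
    (Z₁ Z₂ : EuclideanSpace ℝ (Fin n)) (hZ : Z₁ ≠ Z₂)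
    (d₁ d₂ : ℝ) (hd₂ : 0 ≤ d₂)
    (O : EuclideanSpace ℝ (Fin n) → ℝ)
    (hO : ∀ W, O W = |‖W - Z₁‖ ^ 2 - d₁ ^ 2| + |‖W - Z₂‖ ^ 2 - d₂ ^ 2|)
    (hcase : ‖Z₂ - Z₁‖ ≤ d₁ - d₂) :
    {W : EuclideanSpace ℝ (Fin n) | ∀ V, O W ≤ O V}
      = {Z₁ + (d₁ / ‖Z₂ - Z₁‖) • (Z₂ - Z₁)} := by
  obtain rfl : O = sqDistError Z₁ Z₂ d₁ d₂ := funext hO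
  have hmin := sqDistError_add_div_norm_smul hZ hd₂ hcase
  ext W
  refine ⟨fun hW => eq_of_sqDistError_le hZ hd₂ hcase ((hW _).trans_eq hmin), ?_⟩
  rintro rfl V
  exact hmin.trans_le (sqDistError_ge hd₂ hcase V)

/-- Two measurements, squared distance error, case (d): if `d₁ - d₂ ≥ ‖Z₂ - Z₁‖`, then
the set of global minimizers of `O(W) = |‖W - Z₁‖² - d₁²| + |‖W - Z₂‖² - d₂²|` is
exactly the single point `N₁ = Z₁ + d₁ (Z₂ - Z₁)/‖Z₂ - Z₁‖`. -/
theorem two_meas_squared_error_case_d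
    (n : ℕ) (hn : n = 2 ∨ n = 3)
    (Z₁ Z₂ : EuclideanSpace ℝ (Fin n)) (hZ : Z₁ ≠ Z₂)
    (d₁ d₂ : ℝ) (hd₂ : 0 ≤ d₂) (hd : d₂ ≤ d₁)
    (O : EuclideanSpace ℝ (Fin n) → ℝ)
    (hO : ∀ W, O W = |‖W - Z₁‖ ^ 2 - d₁ ^ 2| + |‖W - Z₂‖ ^ 2 - d₂ ^ 2|)
    (hcase : ‖Z₂ - Z₁‖ ≤ d₁ - d₂) :
    {W : EuclideanSpace ℝ (Fin n) | ∀ V, O W ≤ O V}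
      = {Z₁ + (d₁ / ‖Z₂ - Z₁‖) • (Z₂ - Z₁)} :=
  two_meas_squared_error_case_d_general n Z₁ Z₂ hZ d₁ d₂ hd₂ O hO hcase
end

section
/- Let Z_1, Z_2 ∈ ℝ³ with Z_1 ≠ Z_2 and d_1 ≥ d_2 ≥ 0, and let X be the set of global minimizers of the squared-distance-error objective O(W) = |‖W − Z_1‖² − d_1²| + |‖W − Z_2‖² − d_2²| on ℝ³. Then X has exactly one element if and only if ‖Z_2 − Z_1‖ ≥ d_1 + d_2 or ‖Z_2 − Z_1‖ ≤ d_1 − d_2, and X is infinite if and only if d_1 − d_2 < ‖Z_2 − Z_1‖ < d_1 + d_2. -/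
open scoped InnerProductSpace

private lemma sq_eq_imp (a b : ℝ) (ha : 0 ≤ a) (hb : 0 ≤ b) (h : a^2 = b^2) : a = b := by
  have h1 := Real.sqrt_sq ha
  rw [← h1, h, Real.sqrt_sq hb]

private lemma realA1 (L d₁ d₂ r₁ r₂ : ℝ) (h1 : d₁ + d₂ ≤ L) (h2 : 2 * d₁ ≤ L)
    (hd₂ : 0 ≤ d₂) (hd : d₂ ≤ d₁) (htri : L ≤ r₁ + r₂) (hr₁ : 0 ≤ r₁) (hr₂ : 0 ≤ r₂) :
    L^2/2 - d₁^2 - d₂^2 ≤ |r₁^2 - d₁^2| + |r₂^2 - d₂^2| ∧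
    (|r₁^2 - d₁^2| + |r₂^2 - d₂^2| ≤ L^2/2 - d₁^2 - d₂^2 → r₁ = L/2 ∧ r₂ = L/2) := by
  have hL0 : 0 ≤ L := by linarith
  have a1 := le_abs_self (r₁^2 - d₁^2)
  have a2 := le_abs_self (r₂^2 - d₂^2)
  have hsq : L * L ≤ (r₁ + r₂) * (r₁ + r₂) := mul_self_le_mul_self hL0 htri
  constructor
  · nlinarith [sq_nonneg (r₁ - r₂)]
  · intro h
    have e1 : (r₁ - L/2)^2 = 0 := by
      have h0 : (r₁ - L/2)^2 + (r₂ - L/2)^2 ≤ 0 := by nlinarith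
      nlinarith [sq_nonneg (r₂ - L/2), sq_nonneg (r₁ - L/2)]
    have e2 : (r₂ - L/2)^2 = 0 := by
      have h0 : (r₁ - L/2)^2 + (r₂ - L/2)^2 ≤ 0 := by nlinarith
      nlinarith [sq_nonneg (r₂ - L/2), sq_nonneg (r₁ - L/2)]
    constructor <;> [skip; skip] <;>
    · first
      | (have := pow_eq_zero_iff (n := 2) (by norm_num) |>.mp e1; linarith [sub_eq_zero.mp this])
      | (have := pow_eq_zero_iff (n := 2) (by norm_num) |>.mp e2; linarith [sub_eq_zero.mp this])

private lemma realA2 (L d₁ d₂ r₁ r₂ : ℝ) (h1 : d₁ + d₂ ≤ L) (h2 : L ≤ 2 * d₁)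
    (hd₂ : 0 ≤ d₂) (hd : d₂ ≤ d₁) (htri : L ≤ r₁ + r₂) (hr₁ : 0 ≤ r₁) (hr₂ : 0 ≤ r₂) :
    (d₁ - L)^2 - d₂^2 ≤ |r₁^2 - d₁^2| + |r₂^2 - d₂^2| ∧
    (|r₁^2 - d₁^2| + |r₂^2 - d₂^2| ≤ (d₁ - L)^2 - d₂^2 → r₁ = d₁ ∧ r₂ = L - d₁) := by
  have hd₁0 : 0 ≤ d₁ := le_trans hd₂ hd
  have hLd : 0 ≤ L - d₁ := by linarith
  have a1 := le_abs_self (r₁^2 - d₁^2)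
  have a2 := le_abs_self (r₂^2 - d₂^2)
  have an1 := abs_nonneg (r₁^2 - d₁^2)
  rcases le_total r₂ (L - d₁) with hc | hc
  · -- r₂ ≤ L - d₁, so r₁ ≥ L - r₂ ≥ d₁
    have hr1b : (L - r₂) * (L - r₂) ≤ r₁ * r₁ :=
      mul_self_le_mul_self (by linarith) (by linarith)
    have hprod : 0 ≤ ((L - d₁) - r₂) * (d₁ - r₂) :=
      mul_nonneg (by linarith) (by linarith)
    constructor
    · nlinarith
    · intro h
      have hr2 : r₂ = L - d₁ := by
        by_contra hne
        have hlt : r₂ < L - d₁ := lt_of_le_of_ne hc hne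
        have : 0 < ((L - d₁) - r₂) * (d₁ - r₂) :=
          mul_pos (by linarith) (by linarith)
        nlinarith
      have hr1 : r₁ = d₁ := by
        have h1' : r₁^2 ≤ d₁^2 := by nlinarith
        have h2' : d₁^2 ≤ r₁^2 := by nlinarith
        exact sq_eq_imp r₁ d₁ hr₁ hd₁0 (le_antisymm h1' h2')
      exact ⟨hr1, hr2⟩
  · -- r₂ ≥ L - d₁
    have hr2b : (L - d₁)^2 ≤ r₂^2 := by
      have := mul_self_le_mul_self hLd hc; nlinarith
    constructor
    · linarith
    · intro h
      have hr2 : r₂ = L - d₁ := by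
        have h1' : r₂^2 ≤ (L - d₁)^2 := by linarith
        exact sq_eq_imp r₂ (L - d₁) hr₂ hLd (le_antisymm h1' hr2b)
      have hr1 : r₁ = d₁ := by
        have h1' : |r₁^2 - d₁^2| ≤ 0 := by linarith
        have h2' : r₁^2 = d₁^2 := by
          have := abs_nonneg (r₁^2 - d₁^2)
          have : |r₁^2 - d₁^2| = 0 := le_antisymm h1' this
          have := abs_eq_zero.mp this
          linarith
        exact sq_eq_imp r₁ d₁ hr₁ hd₁0 h2'
      exact ⟨hr1, hr2⟩

private lemma realB (L d₁ d₂ r₁ r₂ : ℝ) (h1 : L ≤ d₁ - d₂) (hL : 0 < L)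
    (hd₂ : 0 ≤ d₂) (htri : r₁ ≤ r₂ + L) (hr₁ : 0 ≤ r₁) (hr₂ : 0 ≤ r₂) :
    (d₁ - L)^2 - d₂^2 ≤ |r₁^2 - d₁^2| + |r₂^2 - d₂^2| ∧
    (|r₁^2 - d₁^2| + |r₂^2 - d₂^2| ≤ (d₁ - L)^2 - d₂^2 → r₁ = d₁ ∧ r₂ = d₁ - L) := by
  have hd₁0 : 0 < d₁ := by linarith
  have hdL : 0 ≤ d₁ - L := by linarith
  have a1 := neg_abs_le (r₁^2 - d₁^2)
  have a2 := le_abs_self (r₂^2 - d₂^2)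
  have an1 := abs_nonneg (r₁^2 - d₁^2)
  rcases le_total r₂ (d₁ - L) with hc | hc
  · have hr1b : r₁ * r₁ ≤ (r₂ + L) * (r₂ + L) := mul_self_le_mul_self hr₁ htri
    have hslack : 0 ≤ 2 * L * ((d₁ - L) - r₂) := by
      have := mul_nonneg hL.le (by linarith : (0:ℝ) ≤ (d₁ - L) - r₂); linarith
    constructor
    · nlinarith
    · intro h
      have hr2 : r₂ = d₁ - L := by
        by_contra hne
        have hlt : r₂ < d₁ - L := lt_of_le_of_ne hc hne
        have : 0 < 2 * L * ((d₁ - L) - r₂) := by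
          have := mul_pos hL (show (0:ℝ) < (d₁ - L) - r₂ by linarith); linarith
        nlinarith
      have hr1 : r₁ = d₁ := by
        have hle : r₁ ≤ d₁ := by rw [hr2] at htri; linarith
        have hle2 : r₁^2 ≤ d₁^2 := by nlinarith
        have hge : d₁^2 ≤ r₁^2 := by nlinarith
        exact sq_eq_imp r₁ d₁ hr₁ hd₁0.le (le_antisymm hle2 hge)
      exact ⟨hr1, hr2⟩
  · have hr2b : (d₁ - L)^2 ≤ r₂^2 := by
      have := mul_self_le_mul_self hdL hc; nlinarith
    constructor
    · linarith
    · intro h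
      have hr2 : r₂ = d₁ - L := by
        have h1' : r₂^2 ≤ (d₁ - L)^2 := by linarith
        exact sq_eq_imp r₂ (d₁ - L) hr₂ hdL (le_antisymm h1' hr2b)
      have hr1 : r₁ = d₁ := by
        have h1' : |r₁^2 - d₁^2| ≤ 0 := by linarith
        have h2' : r₁^2 = d₁^2 := by
          have h3 := abs_nonneg (r₁^2 - d₁^2)
          have h4 : |r₁^2 - d₁^2| = 0 := le_antisymm h1' h3
          have := abs_eq_zero.mp h4
          linarith
        exact sq_eq_imp r₁ d₁ hr₁ hd₁0.le h2'
      exact ⟨hr1, hr2⟩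


noncomputable section

abbrev E3 := EuclideanSpace ℝ (Fin 3)

example (x y : E3) : ‖x - y‖ ^ 2 = ‖x‖ ^ 2 - 2 * ⟪x, y⟫_ℝ + ‖y‖ ^ 2 := norm_sub_sq_real x y

private lemma collinear_of_norms (Z₁ Z₂ W : E3) (a : ℝ) (hz : Z₂ - Z₁ ≠ 0)
    (h1 : ‖W - Z₁‖ ^ 2 = a ^ 2)
    (h2 : ‖W - Z₂‖ ^ 2 = (a - ‖Z₂ - Z₁‖) ^ 2) :
    W = Z₁ + (a / ‖Z₂ - Z₁‖) • (Z₂ - Z₁) := by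
  set z : E3 := Z₂ - Z₁ with hzdef
  set L : ℝ := ‖z‖ with hLdef
  have hL0 : L ≠ 0 := norm_ne_zero_iff.mpr hz
  have hinner : ⟪W - Z₁, z⟫_ℝ = a * L := by
    have hx := norm_sub_sq_real (W - Z₁) z
    have he : (W - Z₁) - z = W - Z₂ := by rw [hzdef]; abel
    rw [he, h1, h2] at hx
    have hL2 : ‖z‖ ^ 2 = L ^ 2 := by rw [hLdef]
    nlinarith [hx]
  have hkey : ‖(W - Z₁) - (a / L) • z‖ ^ 2 = 0 := by
    rw [norm_sub_sq_real, real_inner_smul_right, hinner, norm_smul, h1]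
    rw [Real.norm_eq_abs, mul_pow, sq_abs]
    field_simp
    ring
  have : (W - Z₁) - (a / L) • z = 0 := by
    have := pow_eq_zero_iff (n := 2) (by norm_num) |>.mp hkey
    exact norm_eq_zero.mp this
  have : W - Z₁ = (a / L) • z := by rwa [sub_eq_zero] at this
  rw [this.symm]
  abel

private lemma exists_orthonormal_pair (z : E3) (hz : z ≠ 0) :
    ∃ v w : E3, ‖v‖ = 1 ∧ ‖w‖ = 1 ∧ ⟪v, w⟫_ℝ = 0 ∧ ⟪z, v⟫_ℝ = 0 ∧ ⟪z, w⟫_ℝ = 0 := by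
  have hdim : Module.finrank ℝ ((ℝ ∙ z)ᗮ : Submodule ℝ E3) = 2 := by
    have h1 : Module.finrank ℝ (ℝ ∙ z) = 1 := finrank_span_singleton hz
    have h2 := Submodule.finrank_add_finrank_orthogonal (𝕜 := ℝ) (E := E3) (ℝ ∙ z)
    have h3 : Module.finrank ℝ E3 = 3 := finrank_euclideanSpace_fin
    omega
  let b := (stdOrthonormalBasis ℝ ((ℝ ∙ z)ᗮ : Submodule ℝ E3)).reindex (finCongr hdim)
  refine ⟨(b 0 : E3), (b 1 : E3), ?_, ?_, ?_, ?_, ?_⟩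
  · exact b.orthonormal.1 0
  · exact b.orthonormal.1 1
  · exact b.orthonormal.2 (by norm_num : (0 : Fin 2) ≠ 1)
  · exact ((b 0).2 z (Submodule.mem_span_singleton_self z))
  · exact ((b 1).2 z (Submodule.mem_span_singleton_self z))

end


private lemma norm_triple (z v w : EuclideanSpace ℝ (Fin 3)) (c b1 b2 : ℝ)
    (hzv : ⟪z, v⟫_ℝ = 0) (hzw : ⟪z, w⟫_ℝ = 0) (hvw : ⟪v, w⟫_ℝ = 0)
    (hv : ‖v‖ = 1) (hw : ‖w‖ = 1) :
    ‖c • z + b1 • v + b2 • w‖ ^ 2 = c ^ 2 * ‖z‖ ^ 2 + b1 ^ 2 + b2 ^ 2 := by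
  have hvz : ⟪v, z⟫_ℝ = 0 := by rw [real_inner_comm]; exact hzv
  have hwz : ⟪w, z⟫_ℝ = 0 := by rw [real_inner_comm]; exact hzw
  have hwv : ⟪w, v⟫_ℝ = 0 := by rw [real_inner_comm]; exact hvw
  have hvv : ⟪v, v⟫_ℝ = 1 := by
    rw [real_inner_self_eq_norm_sq, hv]; norm_num
  have hww : ⟪w, w⟫_ℝ = 1 := by
    rw [real_inner_self_eq_norm_sq, hw]; norm_num
  have hzz : ⟪z, z⟫_ℝ = ‖z‖ ^ 2 := real_inner_self_eq_norm_sq z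
  rw [← real_inner_self_eq_norm_sq]
  simp only [inner_add_left, inner_add_right, real_inner_smul_left, real_inner_smul_right,
    hzv, hzw, hvw, hvz, hwz, hwv, hvv, hww, hzz]
  ring

set_option maxHeartbeats 1000000 in
/-- Two measurements, squared distance error, three dimensions: the solution set `X`
has exactly one element iff `‖Z₂ - Z₁‖ ≥ d₁ + d₂` or `‖Z₂ - Z₁‖ ≤ d₁ - d₂`, and is
infinite iff `d₁ - d₂ < ‖Z₂ - Z₁‖ < d₁ + d₂`. -/

theorem two_meas_squared_error_count_3D
    (Z₁ Z₂ : EuclideanSpace ℝ (Fin 3)) (hZ : Z₁ ≠ Z₂)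
    (d₁ d₂ : ℝ) (hd₂ : 0 ≤ d₂) (hd : d₂ ≤ d₁)
    (O : EuclideanSpace ℝ (Fin 3) → ℝ)
    (hO : ∀ W, O W = |‖W - Z₁‖ ^ 2 - d₁ ^ 2| + |‖W - Z₂‖ ^ 2 - d₂ ^ 2|)
    (X : Set (EuclideanSpace ℝ (Fin 3)))
    (hX : X = {W | ∀ V, O W ≤ O V}) :
    (X.encard = 1 ↔ (d₁ + d₂ ≤ ‖Z₂ - Z₁‖ ∨ ‖Z₂ - Z₁‖ ≤ d₁ - d₂)) ∧
    (X.Infinite ↔ (d₁ - d₂ < ‖Z₂ - Z₁‖ ∧ ‖Z₂ - Z₁‖ < d₁ + d₂)) := by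
  have hzne : Z₂ - Z₁ ≠ 0 := sub_ne_zero.mpr (Ne.symm hZ)
  set L := ‖Z₂ - Z₁‖ with hLdef
  have hL : 0 < L := by rw [hLdef]; exact norm_pos_iff.mpr hzne
  have hd₁0 : 0 ≤ d₁ := le_trans hd₂ hd
  have tri1 : ∀ W : EuclideanSpace ℝ (Fin 3), L ≤ ‖W - Z₁‖ + ‖W - Z₂‖ := by
    intro W
    have h := norm_sub_le (W - Z₁) (W - Z₂)
    have he : (W - Z₁) - (W - Z₂) = Z₂ - Z₁ := by abel
    rw [he] at h
    exact h
  have tri2 : ∀ W : EuclideanSpace ℝ (Fin 3), ‖W - Z₁‖ ≤ ‖W - Z₂‖ + L := by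
    intro W
    have he : (W - Z₂) + (Z₂ - Z₁) = W - Z₁ := by abel
    calc ‖W - Z₁‖ = ‖(W - Z₂) + (Z₂ - Z₁)‖ := by rw [he]
    _ ≤ ‖W - Z₂‖ + ‖Z₂ - Z₁‖ := norm_add_le _ _
  -- uniqueness direction
  have huniq : (d₁ + d₂ ≤ L ∨ L ≤ d₁ - d₂) → ∃ W₀, X = {W₀} := by
    intro hcond
    obtain ⟨a, m, ha0, hlow, heq, hWval⟩ :
        ∃ a m : ℝ, 0 ≤ a ∧ (∀ W : EuclideanSpace ℝ (Fin 3), m ≤ O W) ∧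
          (∀ W : EuclideanSpace ℝ (Fin 3), O W ≤ m →
            ‖W - Z₁‖ ^ 2 = a ^ 2 ∧ ‖W - Z₂‖ ^ 2 = (a - L) ^ 2) ∧
          (|a ^ 2 - d₁ ^ 2| + |(a - L) ^ 2 - d₂ ^ 2| ≤ m) := by
      rcases hcond with hA | hB
      · rcases le_total (2 * d₁) L with hA1 | hA2
        · refine ⟨L / 2, L ^ 2 / 2 - d₁ ^ 2 - d₂ ^ 2, by linarith, ?_, ?_, ?_⟩
          · intro W
            rw [hO]
            exact (realA1 L d₁ d₂ ‖W - Z₁‖ ‖W - Z₂‖ hA hA1 hd₂ hd (tri1 W)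
              (norm_nonneg _) (norm_nonneg _)).1
          · intro W hle
            rw [hO] at hle
            obtain ⟨e1, e2⟩ := (realA1 L d₁ d₂ ‖W - Z₁‖ ‖W - Z₂‖ hA hA1 hd₂ hd (tri1 W)
              (norm_nonneg _) (norm_nonneg _)).2 hle
            exact ⟨by rw [e1], by rw [e2]; ring⟩
          · have k1 : (0:ℝ) ≤ (L / 2) ^ 2 - d₁ ^ 2 := by nlinarith
            have k2 : (0:ℝ) ≤ (L / 2 - L) ^ 2 - d₂ ^ 2 := by nlinarith
            rw [abs_of_nonneg k1, abs_of_nonneg k2]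
            nlinarith
        · refine ⟨d₁, (d₁ - L) ^ 2 - d₂ ^ 2, hd₁0, ?_, ?_, ?_⟩
          · intro W
            rw [hO]
            exact (realA2 L d₁ d₂ ‖W - Z₁‖ ‖W - Z₂‖ hA hA2 hd₂ hd (tri1 W)
              (norm_nonneg _) (norm_nonneg _)).1
          · intro W hle
            rw [hO] at hle
            obtain ⟨e1, e2⟩ := (realA2 L d₁ d₂ ‖W - Z₁‖ ‖W - Z₂‖ hA hA2 hd₂ hd (tri1 W)
              (norm_nonneg _) (norm_nonneg _)).2 hle
            exact ⟨by rw [e1], by rw [e2]; ring⟩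
          · have k1 : |d₁ ^ 2 - d₁ ^ 2| = 0 := by simp
            have k2 : (0:ℝ) ≤ (d₁ - L) ^ 2 - d₂ ^ 2 := by nlinarith
            rw [k1, abs_of_nonneg k2]
            linarith
      · refine ⟨d₁, (d₁ - L) ^ 2 - d₂ ^ 2, hd₁0, ?_, ?_, ?_⟩
        · intro W
          rw [hO]
          exact (realB L d₁ d₂ ‖W - Z₁‖ ‖W - Z₂‖ hB hL hd₂ (tri2 W)
            (norm_nonneg _) (norm_nonneg _)).1
        · intro W hle
          rw [hO] at hle
          obtain ⟨e1, e2⟩ := (realB L d₁ d₂ ‖W - Z₁‖ ‖W - Z₂‖ hB hL hd₂ (tri2 W)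
            (norm_nonneg _) (norm_nonneg _)).2 hle
          exact ⟨by rw [e1], by rw [e2]⟩
        · have k1 : |d₁ ^ 2 - d₁ ^ 2| = 0 := by simp
          have k2 : (0:ℝ) ≤ (d₁ - L) ^ 2 - d₂ ^ 2 := by nlinarith
          rw [k1, abs_of_nonneg k2]
          linarith
    set W₀ := Z₁ + (a / L) • (Z₂ - Z₁) with hW₀
    have hs1 : W₀ - Z₁ = (a / L) • (Z₂ - Z₁) := by rw [hW₀]; abel
    have hs2 : W₀ - Z₂ = ((a - L) / L) • (Z₂ - Z₁) := by
      have h' : ((a - L) / L) • (Z₂ - Z₁) = (a / L) • (Z₂ - Z₁) - (Z₂ - Z₁) := by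
        rw [sub_div, div_self hL.ne', sub_smul, one_smul]
      rw [hW₀, h']
      abel
    have hn1 : ‖W₀ - Z₁‖ ^ 2 = a ^ 2 := by
      rw [hs1, norm_smul, Real.norm_eq_abs, mul_pow, sq_abs, ← hLdef]
      field_simp
    have hn2 : ‖W₀ - Z₂‖ ^ 2 = (a - L) ^ 2 := by
      rw [hs2, norm_smul, Real.norm_eq_abs, mul_pow, sq_abs, ← hLdef]
      field_simp
    have hOW₀ : O W₀ ≤ m := by rw [hO, hn1, hn2]; exact hWval
    refine ⟨W₀, ?_⟩
    ext W
    rw [hX]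
    simp only [Set.mem_setOf_eq, Set.mem_singleton_iff]
    constructor
    · intro hmem
      have hle : O W ≤ m := le_trans (hmem W₀) hOW₀
      obtain ⟨e1, e2⟩ := heq W hle
      rw [hW₀]
      exact collinear_of_norms Z₁ Z₂ W a hzne e1 e2
    · intro hWeq V
      rw [hWeq]
      exact le_trans hOW₀ (hlow V)
  -- infinite direction
  have hinf : (d₁ - d₂ < L ∧ L < d₁ + d₂) → X.Infinite := by
    rintro ⟨hs1, hs2⟩
    obtain ⟨v, w, hv, hw, hvw, hzv, hzw⟩ := exists_orthonormal_pair (Z₂ - Z₁) hzne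
    set t₀ := (L ^ 2 + d₁ ^ 2 - d₂ ^ 2) / (2 * L) with ht₀
    have ht : t₀ * (2 * L) = L ^ 2 + d₁ ^ 2 - d₂ ^ 2 := by
      rw [ht₀]; field_simp
    have hD : 0 < d₁ ^ 2 - t₀ ^ 2 := by
      have f1 : 0 < d₁ + d₂ - L := by linarith
      have f2 : 0 < d₂ + L - d₁ := by linarith
      have f3 : 0 < L + d₁ - d₂ := by linarith
      have f4 : 0 < L + d₁ + d₂ := by linarith
      have hp : 0 < (d₁ + d₂ - L) * ((d₂ + L - d₁) * ((L + d₁ - d₂) * (L + d₁ + d₂))) :=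
        mul_pos f1 (mul_pos f2 (mul_pos f3 f4))
      nlinarith [sq_nonneg t₀, mul_pos hL hL]
    set ρ := Real.sqrt (d₁ ^ 2 - t₀ ^ 2) with hρdef
    have hρ2 : ρ ^ 2 = d₁ ^ 2 - t₀ ^ 2 := Real.sq_sqrt hD.le
    have hρ0 : 0 < ρ := Real.sqrt_pos.mpr hD
    set f : ℝ → EuclideanSpace ℝ (Fin 3) := fun θ =>
      Z₁ + (t₀ / L) • (Z₂ - Z₁) + (ρ * Real.cos θ) • v + (ρ * Real.sin θ) • w with hf
    have hmem : ∀ θ : ℝ, f θ ∈ X := by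
      intro θ
      have hfz1 : f θ - Z₁ =
          (t₀ / L) • (Z₂ - Z₁) + (ρ * Real.cos θ) • v + (ρ * Real.sin θ) • w := by
        simp only [hf]; abel
      have hfz2 : f θ - Z₂ =
          ((t₀ - L) / L) • (Z₂ - Z₁) + (ρ * Real.cos θ) • v + (ρ * Real.sin θ) • w := by
        have h' : ((t₀ - L) / L) • (Z₂ - Z₁) = (t₀ / L) • (Z₂ - Z₁) - (Z₂ - Z₁) := by
          rw [sub_div, div_self hL.ne', sub_smul, one_smul]
        simp only [hf]
        rw [h']
        abel
      have hpyth : (ρ * Real.cos θ) ^ 2 + (ρ * Real.sin θ) ^ 2 = ρ ^ 2 := by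
        have := Real.sin_sq_add_cos_sq θ
        nlinarith [this]
      have hn1 : ‖f θ - Z₁‖ ^ 2 = d₁ ^ 2 := by
        rw [hfz1, norm_triple _ _ _ _ _ _ hzv hzw hvw hv hw, ← hLdef]
        have : (t₀ / L) ^ 2 * L ^ 2 = t₀ ^ 2 := by field_simp
        rw [this]
        linarith [hpyth, hρ2]
      have hn2 : ‖f θ - Z₂‖ ^ 2 = d₂ ^ 2 := by
        rw [hfz2, norm_triple _ _ _ _ _ _ hzv hzw hvw hv hw, ← hLdef]
        have h'' : ((t₀ - L) / L) ^ 2 * L ^ 2 = (t₀ - L) ^ 2 := by field_simp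
        rw [h'']
        nlinarith [hpyth, hρ2, ht]
      have hOf : O (f θ) = 0 := by rw [hO, hn1, hn2]; simp
      rw [hX]
      intro V
      rw [hOf, hO]
      positivity
    have hinj : Set.InjOn f (Set.Ioo 0 Real.pi) := by
      intro θ₁ h₁ θ₂ h₂ hfe
      have hsub : (ρ * (Real.cos θ₁ - Real.cos θ₂)) • v
          + (ρ * (Real.sin θ₁ - Real.sin θ₂)) • w = 0 := by
        have h' : f θ₁ - f θ₂ = (ρ * (Real.cos θ₁ - Real.cos θ₂)) • v
            + (ρ * (Real.sin θ₁ - Real.sin θ₂)) • w := by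
          simp only [hf]
          module
        rw [← h', sub_eq_zero]
        exact hfe
      have hwv : ⟪w, v⟫_ℝ = 0 := by rw [real_inner_comm]; exact hvw
      have hvv : ⟪v, v⟫_ℝ = 1 := by rw [real_inner_self_eq_norm_sq, hv]; norm_num
      have h0 := congrArg (fun x : EuclideanSpace ℝ (Fin 3) => ⟪x, v⟫_ℝ) hsub
      simp only [inner_add_left, real_inner_smul_left, inner_zero_left, hvv, hwv,
        mul_one, mul_zero, add_zero] at h0
      have hcos : Real.cos θ₁ = Real.cos θ₂ := by
        have := mul_eq_zero.mp h0
        rcases this with h | h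
        · exact absurd h hρ0.ne'
        · linarith [sub_eq_zero.mp h]
      exact Real.injOn_cos ⟨h₁.1.le, h₁.2.le⟩ ⟨h₂.1.le, h₂.2.le⟩ hcos
    have hIoo : (Set.Ioo (0:ℝ) Real.pi).Infinite := Set.Ioo_infinite Real.pi_pos
    refine Set.Infinite.mono ?_ (hIoo.image hinj)
    rintro x ⟨θ, hθ, rfl⟩
    exact hmem θ
  constructor
  · constructor
    · intro h1
      by_contra hc
      push_neg at hc
      have hXinf := hinf ⟨hc.2, hc.1⟩
      rw [hXinf.encard_eq] at h1
      norm_num at h1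
    · intro h
      obtain ⟨W₀, hXe⟩ := huniq h
      rw [hXe]
      exact Set.encard_singleton W₀
  · constructor
    · intro h1
      by_contra hc
      push_neg at hc
      have hcond : d₁ + d₂ ≤ L ∨ L ≤ d₁ - d₂ := by
        rcases le_or_gt L (d₁ - d₂) with h' | h'
        · exact Or.inr h'
        · exact Or.inl (hc h')
      obtain ⟨W₀, hXe⟩ := huniq hcond
      rw [hXe] at h1
      exact (Set.finite_singleton W₀).not_infinite h1
    · exact hinf
end

section
/- Let n = 2 or n = 3, let Z_1, Z_2 ∈ ℝ^n with Z_1 ≠ Z_2, and let d_1 ≥ d_2 ≥ 0. If d_1 + d_2 ≤ ‖Z_2 − Z_1‖, then the set of global minimizers of the distance-error objective O(W) = |‖W − Z_1‖ − d_1| + |‖W − Z_2‖ − d_2| is exactly the set of points W on the closed segment joining Z_1 and Z_2 that satisfy ‖W − Z_1‖ ≥ d_1 and ‖W − Z_2‖ ≥ d_2. -/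
/-!
By the triangle inequality `‖W - Z₁‖ + ‖W - Z₂‖ ≥ ‖Z₂ - Z₁‖`, so
`O(W) ≥ ‖Z₂ - Z₁‖ - d₁ - d₂`, with equality exactly when `‖W - Z₁‖ ≥ d₁`, `‖W - Z₂‖ ≥ d₂`
and the triangle inequality is tight; in a strictly convex space the latter means that `W` lies
on the segment `[Z₁, Z₂]`. Since `d₁ + d₂ ≤ ‖Z₂ - Z₁‖`, the point of the segment at distance
`d₁` from `Z₁` attains the bound.
-/

theorem abs_sub_add_abs_sub_eq_iff {a b d₁ d₂ D : ℝ} (h : D ≤ a + b) :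
    |a - d₁| + |b - d₂| = D - d₁ - d₂ ↔ d₁ ≤ a ∧ d₂ ≤ b ∧ a + b = D := by
  constructor
  · intro heq
    refine ⟨?_, ?_, ?_⟩ <;>
      linarith [le_abs_self (a - d₁), le_abs_self (b - d₂), neg_abs_le (a - d₁),
        neg_abs_le (b - d₂)]
  · rintro ⟨h₁, h₂, rfl⟩
    rw [abs_of_nonneg (sub_nonneg.2 h₁), abs_of_nonneg (sub_nonneg.2 h₂)]
    ring

section

variable {P : Type*} [PseudoMetricSpace P]

def distError (Z₁ Z₂ : P) (d₁ d₂ : ℝ) (W : P) : ℝ :=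
  |dist W Z₁ - d₁| + |dist W Z₂ - d₂|

theorem sub_sub_le_distError (Z₁ Z₂ : P) (d₁ d₂ : ℝ) (W : P) :
    dist Z₁ Z₂ - d₁ - d₂ ≤ distError Z₁ Z₂ d₁ d₂ W := by
  have := dist_triangle_left Z₁ Z₂ W
  unfold distError
  linarith [le_abs_self (dist W Z₁ - d₁), le_abs_self (dist W Z₂ - d₂)]

end

section

variable {E : Type*} [NormedAddCommGroup E] [NormedSpace ℝ E]

theorem distError_eq_iff [StrictConvexSpace ℝ E] {Z₁ Z₂ : E} {d₁ d₂ : ℝ} {W : E} :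
    distError Z₁ Z₂ d₁ d₂ W = dist Z₁ Z₂ - d₁ - d₂ ↔
      W ∈ segment ℝ Z₁ Z₂ ∧ d₁ ≤ dist W Z₁ ∧ d₂ ≤ dist W Z₂ := by
  rw [distError, abs_sub_add_abs_sub_eq_iff (dist_triangle_left Z₁ Z₂ W), mem_segment_iff_wbtw,
    ← dist_add_dist_eq_iff, dist_comm W Z₁]
  tauto

theorem exists_mem_segment_le_dist_and_le_dist {Z₁ Z₂ : E} {d₁ d₂ : ℝ} (hd₁ : 0 ≤ d₁)
    (hd₂ : 0 ≤ d₂) (h : d₁ + d₂ ≤ dist Z₁ Z₂) :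
    ∃ W ∈ segment ℝ Z₁ Z₂, d₁ ≤ dist W Z₁ ∧ d₂ ≤ dist W Z₂ := by
  set D := dist Z₁ Z₂
  rcases (dist_nonneg : 0 ≤ D).eq_or_lt with hD | hD
  · exact ⟨Z₁, left_mem_segment ℝ Z₁ Z₂, by linarith [dist_nonneg (x := Z₁) (y := Z₁)],
      by linarith [dist_nonneg (x := Z₁) (y := Z₂)]⟩
  have ht₀ : 0 ≤ d₁ / D := div_nonneg hd₁ hD.le
  have ht₁ : d₁ / D ≤ 1 := (div_le_one hD).2 (by linarith)
  refine ⟨AffineMap.lineMap Z₁ Z₂ (d₁ / D),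
    segment_eq_image_lineMap ℝ Z₁ Z₂ ▸ ⟨_, ⟨ht₀, ht₁⟩, rfl⟩, ?_, ?_⟩
  · rw [dist_lineMap_left, Real.norm_of_nonneg ht₀, div_mul_cancel₀ _ hD.ne']
  · rw [dist_lineMap_right, Real.norm_of_nonneg (sub_nonneg.2 ht₁), sub_mul, one_mul,
      div_mul_cancel₀ _ hD.ne']
    linarith

end

theorem two_meas_distance_error_case_a_general
    (n : ℕ)
    (Z₁ Z₂ : EuclideanSpace ℝ (Fin n))
    (d₁ d₂ : ℝ) (hd₂ : 0 ≤ d₂) (hd : d₂ ≤ d₁)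
    (O : EuclideanSpace ℝ (Fin n) → ℝ)
    (hO : ∀ W, O W = |‖W - Z₁‖ - d₁| + |‖W - Z₂‖ - d₂|)
    (hcase : d₁ + d₂ ≤ ‖Z₂ - Z₁‖) :
    {W : EuclideanSpace ℝ (Fin n) | ∀ V, O W ≤ O V}
      = {W : EuclideanSpace ℝ (Fin n) |
          W ∈ segment ℝ Z₁ Z₂ ∧ d₁ ≤ ‖W - Z₁‖ ∧ d₂ ≤ ‖W - Z₂‖} := by
  have hO' : O = distError Z₁ Z₂ d₁ d₂ :=
    funext fun W => by simp only [hO, distError, dist_eq_norm]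
  rw [← dist_eq_norm'] at hcase
  obtain ⟨W₀, hW₀⟩ := exists_mem_segment_le_dist_and_le_dist (hd₂.trans hd) hd₂ hcase
  have hW₀min := distError_eq_iff.2 hW₀
  ext W
  simp only [Set.mem_ofPred_eq, ← dist_eq_norm, hO', ← distError_eq_iff]
  exact ⟨fun hW => le_antisymm (hW₀min ▸ hW W₀) (sub_sub_le_distError ..),
    fun hW V => hW ▸ sub_sub_le_distError ..⟩

/-- Two measurements, distance error, case (a): if `d₁ + d₂ ≤ ‖Z₂ - Z₁‖`, then the set
of global minimizers of `O(W) = |‖W - Z₁‖ - d₁| + |‖W - Z₂‖ - d₂|` is exactly the set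
of points `W` on the closed segment joining `Z₁` and `Z₂` with `‖W - Z₁‖ ≥ d₁` and
`‖W - Z₂‖ ≥ d₂`. -/
theorem two_meas_distance_error_case_a
    (n : ℕ) (hn : n = 2 ∨ n = 3)
    (Z₁ Z₂ : EuclideanSpace ℝ (Fin n)) (hZ : Z₁ ≠ Z₂)
    (d₁ d₂ : ℝ) (hd₂ : 0 ≤ d₂) (hd : d₂ ≤ d₁)
    (O : EuclideanSpace ℝ (Fin n) → ℝ)
    (hO : ∀ W, O W = |‖W - Z₁‖ - d₁| + |‖W - Z₂‖ - d₂|)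
    (hcase : d₁ + d₂ ≤ ‖Z₂ - Z₁‖) :
    {W : EuclideanSpace ℝ (Fin n) | ∀ V, O W ≤ O V}
      = {W : EuclideanSpace ℝ (Fin n) |
          W ∈ segment ℝ Z₁ Z₂ ∧ d₁ ≤ ‖W - Z₁‖ ∧ d₂ ≤ ‖W - Z₂‖} :=
  two_meas_distance_error_case_a_general n Z₁ Z₂ d₁ d₂ hd₂ hd O hO hcase
end

section
/- Let Z_1, Z_2 ∈ ℝ² with Z_1 ≠ Z_2 and d_1 ≥ d_2 ≥ 0, and let X be the set of global minimizers of the distance-error objective O(W) = |‖W − Z_1‖ − d_1| + |‖W − Z_2‖ − d_2| on ℝ². Then: X has exactly one element if and only if ‖Z_2 − Z_1‖ = d_1 + d_2 or ‖Z_2 − Z_1‖ = d_1 − d_2; X has exactly two elements if and only if d_1 − d_2 < ‖Z_2 − Z_1‖ < d_1 + d_2; and X is infinite if and only if ‖Z_2 − Z_1‖ > d_1 + d_2 or ‖Z_2 − Z_1‖ < d_1 − d_2. -/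
open scoped RealInnerProductSpace
open Set

lemma TwoMeas.normsq2 (x : EuclideanSpace ℝ (Fin 2)) : ‖x‖^2 = (x 0)^2 + (x 1)^2 := by
  rw [EuclideanSpace.norm_eq, Real.sq_sqrt (by positivity)]
  simp [Fin.sum_univ_two, Real.norm_eq_abs, sq_abs]

lemma TwoMeas.eq_of_sq_eq {x y : ℝ} (hx : 0 ≤ x) (hy : 0 ≤ y) (h : x^2 = y^2) : x = y := by
  nlinarith

set_option maxHeartbeats 4000000 in
/-- Two measurements, distance error, two dimensions: the solution set `X` has exactly
one element iff `‖Z₂ - Z₁‖ = d₁ + d₂` or `‖Z₂ - Z₁‖ = d₁ - d₂`; exactly two elements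
iff `d₁ - d₂ < ‖Z₂ - Z₁‖ < d₁ + d₂`; and is infinite iff `‖Z₂ - Z₁‖ > d₁ + d₂` or
`‖Z₂ - Z₁‖ < d₁ - d₂`. -/
theorem two_meas_distance_error_count_2D
    (Z₁ Z₂ : EuclideanSpace ℝ (Fin 2)) (hZ : Z₁ ≠ Z₂)
    (d₁ d₂ : ℝ) (hd₂ : 0 ≤ d₂) (hd : d₂ ≤ d₁)
    (O : EuclideanSpace ℝ (Fin 2) → ℝ)
    (hO : ∀ W, O W = |‖W - Z₁‖ - d₁| + |‖W - Z₂‖ - d₂|)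
    (X : Set (EuclideanSpace ℝ (Fin 2)))
    (hX : X = {W | ∀ V, O W ≤ O V}) :
    (X.encard = 1 ↔ (‖Z₂ - Z₁‖ = d₁ + d₂ ∨ ‖Z₂ - Z₁‖ = d₁ - d₂)) ∧
    (X.encard = 2 ↔ (d₁ - d₂ < ‖Z₂ - Z₁‖ ∧ ‖Z₂ - Z₁‖ < d₁ + d₂)) ∧
    (X.Infinite ↔ (d₁ + d₂ < ‖Z₂ - Z₁‖ ∨ ‖Z₂ - Z₁‖ < d₁ - d₂)) := by
  have hd₁ : 0 ≤ d₁ := hd₂.trans hd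
  set z : EuclideanSpace ℝ (Fin 2) := Z₂ - Z₁ with hzdef
  have hzne : z ≠ 0 := sub_ne_zero.mpr (Ne.symm hZ)
  set L : ℝ := ‖z‖ with hLdef
  have hL : 0 < L := norm_pos_iff.mpr hzne
  have hz2 : (z 0)^2 + (z 1)^2 = L^2 := by
    rw [hLdef]; exact (TwoMeas.normsq2 z).symm
  -- characterization of `O W = 0`
  have hOzero : ∀ W, O W = 0 ↔ (‖W - Z₁‖ = d₁ ∧ ‖W - Z₂‖ = d₂) := by
    intro W
    rw [hO]
    constructor
    · intro h
      have h1 : |‖W - Z₁‖ - d₁| = 0 := by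
        have := abs_nonneg (‖W - Z₂‖ - d₂); have := abs_nonneg (‖W - Z₁‖ - d₁); linarith
      have h2 : |‖W - Z₂‖ - d₂| = 0 := by
        have := abs_nonneg (‖W - Z₁‖ - d₁); linarith [abs_nonneg (‖W - Z₂‖ - d₂)]
      rw [abs_eq_zero, sub_eq_zero] at h1 h2
      exact ⟨h1, h2⟩
    · rintro ⟨h1, h2⟩; simp [h1, h2]
  -- if some point is an exact solution, X is the zero set of O
  have hXzero : ∀ W₀, ‖W₀ - Z₁‖ = d₁ → ‖W₀ - Z₂‖ = d₂ →
      X = {W | ‖W - Z₁‖ = d₁ ∧ ‖W - Z₂‖ = d₂} := by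
    intro W₀ h1 h2
    have h0 : O W₀ = 0 := (hOzero W₀).mpr ⟨h1, h2⟩
    rw [hX]; ext W
    simp only [Set.mem_setOf_eq]
    constructor
    · intro hmin
      refine (hOzero W).mp (le_antisymm ?_ ?_)
      · have := hmin W₀; rw [h0] at this; exact this
      · rw [hO]; positivity
    · intro hW V
      rw [(hOzero W).mpr hW, hO]; positivity
  -- uniqueness in the tangent cases
  have huniq : ∀ W, ‖W - Z₁‖ = d₁ → ‖W - Z₂‖ = d₂ → (L = d₁ + d₂ ∨ L = d₁ - d₂) →
      W = Z₁ + (d₁ / L) • z := by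
    intro W h1 h2 hc
    set w : EuclideanSpace ℝ (Fin 2) := W - Z₁ with hwdef
    have hWw : W = Z₁ + w := by rw [hwdef]; abel
    have key : L • w = d₁ • z := by
      rcases hc with hc | hc
      · have hzw : ‖z - w‖ = d₂ := by
          rw [show z - w = -(W - Z₂) by rw [hzdef, hwdef]; abel, norm_neg, h2]
        have hsq : ‖w + (z - w)‖^2 = ‖w‖^2 + 2*⟪w, z-w⟫ + ‖z-w‖^2 := norm_add_sq_real w (z-w)
        rw [show w + (z - w) = z by abel, ← hLdef, h1, hzw] at hsq
        have hinner : ⟪w, z - w⟫ = ‖w‖ * ‖z - w‖ := by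
          rw [h1, hzw]; nlinarith [hsq]
        have h3 := inner_eq_norm_mul_iff_real.mp hinner
        rw [h1, hzw] at h3
        -- h3 : d₂ • w = d₁ • (z - w)
        have h4 : (d₂ + d₁) • w = d₁ • z := by
          rw [add_smul, h3]; module
        rw [hc, show d₁ + d₂ = d₂ + d₁ by ring]
        exact h4
      · have hwz : ‖w - z‖ = d₂ := by
          rw [show w - z = W - Z₂ by rw [hzdef, hwdef]; abel, h2]
        have hsq : ‖z + (w - z)‖^2 = ‖z‖^2 + 2*⟪z, w-z⟫ + ‖w-z‖^2 := norm_add_sq_real z (w-z)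
        rw [show z + (w - z) = w by abel, ← hLdef, h1, hwz] at hsq
        have hinner : ⟪z, w - z⟫ = ‖z‖ * ‖w - z‖ := by
          rw [hwz, ← hLdef]; nlinarith [hsq]
        have h3 := inner_eq_norm_mul_iff_real.mp hinner
        rw [hwz, ← hLdef] at h3
        -- h3 : d₂ • z = L • (w - z)
        have h4 : L • w = (d₂ + L) • z := by
          rw [add_smul, h3]; module
        rw [show d₁ = d₂ + L by linarith]
        exact h4
    have hw : w = (d₁ / L) • z := by
      have h5 := congrArg (fun x : EuclideanSpace ℝ (Fin 2) => L⁻¹ • x) key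
      simpa [smul_smul, inv_mul_cancel₀ hL.ne', div_eq_inv_mul] using h5
    rw [hWw, hw]
  -- tangent case : exactly one solution
  have key1 : (L = d₁ + d₂ ∨ L = d₁ - d₂) → X.encard = 1 := by
    intro hc
    have hn1 : ‖(Z₁ + (d₁ / L) • z) - Z₁‖ = d₁ := by
      rw [show Z₁ + (d₁/L) • z - Z₁ = (d₁/L) • z by abel, norm_smul, Real.norm_eq_abs,
        ← hLdef, abs_of_nonneg (by positivity)]
      field_simp
    have hn2 : ‖(Z₁ + (d₁ / L) • z) - Z₂‖ = d₂ := by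
      rw [show Z₁ + (d₁/L) • z - Z₂ = (d₁/L - 1) • z by rw [hzdef]; module,
        norm_smul, Real.norm_eq_abs, ← hLdef,
        show d₁/L - 1 = (d₁ - L)/L by field_simp, abs_div, abs_of_pos hL,
        div_mul_cancel₀ _ hL.ne']
      rcases hc with hc | hc
      · rw [hc, show d₁ - (d₁ + d₂) = -d₂ by ring, abs_neg, abs_of_nonneg hd₂]
      · rw [hc, show d₁ - (d₁ - d₂) = d₂ by ring, abs_of_nonneg hd₂]
    rw [hXzero _ hn1 hn2,
      show {W : EuclideanSpace ℝ (Fin 2) | ‖W - Z₁‖ = d₁ ∧ ‖W - Z₂‖ = d₂}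
        = {Z₁ + (d₁ / L) • z} from ?_, Set.encard_singleton]
    ext W
    simp only [mem_setOf_eq, mem_singleton_iff]
    exact ⟨fun h => huniq W h.1 h.2 hc, fun h => h ▸ ⟨hn1, hn2⟩⟩
  -- coordinates: second basis vector
  set v : EuclideanSpace ℝ (Fin 2) := (WithLp.equiv 2 (Fin 2 → ℝ)).symm ![-(z 1), z 0] with hvdef
  have hv0 : v 0 = -(z 1) := by rw [hvdef]; simp
  have hv1 : v 1 = z 0 := by rw [hvdef]; simp
  have hnorm1 : ∀ (s t : ℝ), ‖(Z₁ + s • z + t • v) - Z₁‖^2 = (s^2 + t^2) * L^2 := by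
    intro s t
    rw [show Z₁ + s • z + t • v - Z₁ = s • z + t • v by abel, TwoMeas.normsq2]
    simp only [PiLp.add_apply, PiLp.smul_apply, smul_eq_mul, hv0, hv1]
    linear_combination (s^2 + t^2) * hz2
  have hnorm2 : ∀ (s t : ℝ), ‖(Z₁ + s • z + t • v) - Z₂‖^2 = ((s-1)^2 + t^2) * L^2 := by
    intro s t
    rw [show Z₁ + s • z + t • v - Z₂ = (s - 1) • z + t • v by rw [hzdef]; module,
      TwoMeas.normsq2]
    simp only [PiLp.add_apply, PiLp.smul_apply, smul_eq_mul, hv0, hv1]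
    linear_combination ((s-1)^2 + t^2) * hz2
  -- two-intersection case
  have key2 : (d₁ - d₂ < L ∧ L < d₁ + d₂) → X.encard = 2 := by
    rintro ⟨hc1, hc2⟩
    set a : ℝ := (L^2 + d₁^2 - d₂^2)/(2*L) with hadef
    clear_value a
    have h2La : 2*L*a = L^2 + d₁^2 - d₂^2 := by rw [hadef]; field_simp
    have hbb : 0 < d₁^2 - a^2 := by
      have hfac : (d₁^2 - a^2) * (4*L^2)
          = ((d₂ - L + d₁)*(d₂ + L - d₁)) * ((L + d₁ - d₂)*(L + d₁ + d₂)) := by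
        rw [hadef]; field_simp; ring
      have hP : 0 < ((d₂ - L + d₁)*(d₂ + L - d₁)) * ((L + d₁ - d₂)*(L + d₁ + d₂)) :=
        mul_pos (mul_pos (by linarith) (by linarith)) (mul_pos (by linarith) (by linarith))
      have h7 : 0 < (d₁^2 - a^2) * (4*L^2) := hfac ▸ hP
      by_contra hcon
      push_neg at hcon
      have : (d₁^2 - a^2) * (4*L^2) ≤ 0 :=
        mul_nonpos_of_nonpos_of_nonneg hcon (by positivity)
      linarith
    set b : ℝ := Real.sqrt (d₁^2 - a^2) with hbdef
    have hb : 0 < b := Real.sqrt_pos.mpr hbb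
    have hb2 : b^2 = d₁^2 - a^2 := Real.sq_sqrt hbb.le
    clear_value b
    have hmem : ∀ (t : ℝ), t^2 = (b/L)^2 →
        (‖(Z₁ + (a/L) • z + t • v) - Z₁‖ = d₁ ∧ ‖(Z₁ + (a/L) • z + t • v) - Z₂‖ = d₂) := by
      intro t ht
      constructor
      · apply TwoMeas.eq_of_sq_eq (norm_nonneg _) hd₁
        rw [hnorm1, ht]
        have hexp : ((a/L)^2 + (b/L)^2) * L^2 = a^2 + b^2 := by field_simp
        rw [hexp]; linear_combination hb2
      · apply TwoMeas.eq_of_sq_eq (norm_nonneg _) hd₂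
        rw [hnorm2, ht]
        have hexp : ((a/L - 1)^2 + (b/L)^2) * L^2 = (a - L)^2 + b^2 := by field_simp
        rw [hexp]; linear_combination hb2 - h2La
    obtain ⟨hP1, hP2⟩ := hmem (b/L) rfl
    obtain ⟨hQ1, hQ2⟩ := hmem (-(b/L)) (neg_sq _)
    have hPQ : (Z₁ + (a/L) • z + (b/L) • v) ≠ (Z₁ + (a/L) • z + (-(b/L)) • v) := by
      intro h
      have hdz : (Z₁ + (a/L) • z + (b/L) • v) - (Z₁ + (a/L) • z + (-(b/L)) • v)
          = (2*b/L) • v := by module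
      rw [h, sub_self] at hdz
      have h1 : (0:ℝ) = ‖(2*b/L) • v‖^2 := by rw [← hdz]; simp
      rw [TwoMeas.normsq2] at h1
      simp only [PiLp.smul_apply, smul_eq_mul, hv0, hv1] at h1
      have h2 : (2*b/L)^2 * L^2 = 4 * b^2 := by field_simp; ring
      nlinarith [h1, hz2, hb, hL, h2]
    rw [hXzero _ hP1 hP2,
      show {W : EuclideanSpace ℝ (Fin 2) | ‖W - Z₁‖ = d₁ ∧ ‖W - Z₂‖ = d₂}
        = {Z₁ + (a/L) • z + (b/L) • v, Z₁ + (a/L) • z + (-(b/L)) • v} from ?_,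
      Set.encard_pair hPQ]
    ext W
    simp only [mem_setOf_eq, mem_insert_iff, mem_singleton_iff]
    constructor
    · rintro ⟨h1, h2⟩
      set s : ℝ := ((W - Z₁) 0 * z 0 + (W - Z₁) 1 * z 1)/L^2 with hsdef
      set t : ℝ := (-((W - Z₁) 0) * z 1 + (W - Z₁) 1 * z 0)/L^2 with htdef
      clear_value s t
      have hrep : W = Z₁ + s • z + t • v := by
        ext i
        fin_cases i
        · show W 0 = (Z₁ + s • z + t • v) 0
          simp only [PiLp.add_apply, PiLp.smul_apply, smul_eq_mul, hv0, hv1, hsdef, htdef,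
            PiLp.sub_apply]
          field_simp
          linear_combination (-1) * (W 0 - Z₁ 0) * hz2
        · show W 1 = (Z₁ + s • z + t • v) 1
          simp only [PiLp.add_apply, PiLp.smul_apply, smul_eq_mul, hv0, hv1, hsdef, htdef,
            PiLp.sub_apply]
          field_simp
          linear_combination (-1) * (W 1 - Z₁ 1) * hz2
      have e1 : ‖(Z₁ + s • z + t • v) - Z₁‖^2 = (s^2 + t^2) * L^2 := hnorm1 s t
      have e2 : ‖(Z₁ + s • z + t • v) - Z₂‖^2 = ((s-1)^2 + t^2) * L^2 := hnorm2 s t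
      rw [← hrep, h1] at e1
      rw [← hrep, h2] at e2
      have hss : s * (2*L^2) = L^2 + d₁^2 - d₂^2 := by linear_combination e2 - e1
      have hsa : s * L = a := by
        rw [hadef]; field_simp; linear_combination hss
      have hs : s = a / L := by rw [eq_div_iff hL.ne']; exact hsa
      have h6 : t^2 * L^2 = b^2 := by
        rw [hb2]; linear_combination (-1) * e1 - (s*L + a) * hsa
      have htt : (t*L - b) * (t*L + b) = 0 := by linear_combination h6
      rcases mul_eq_zero.mp htt with h7 | h7
      · left
        have ht : t = b / L := by rw [eq_div_iff hL.ne']; linarith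
        rw [hrep, hs, ht]
      · right
        have ht : t = -(b / L) := by
          rw [show -(b/L) = (-b)/L from (neg_div L b).symm, eq_div_iff hL.ne']
          linarith
        rw [hrep, hs, ht]
    · rintro (rfl | rfl)
      · exact ⟨hP1, hP2⟩
      · exact ⟨hQ1, hQ2⟩
  -- infinite cases
  have hfam : ∀ t : ℝ, 0 ≤ t → ‖(Z₁ + (t/L) • z) - Z₁‖ = t ∧ ‖(Z₁ + (t/L) • z) - Z₂‖ = |t - L| := by
    intro t ht
    constructor
    · rw [show Z₁ + (t/L) • z - Z₁ = (t/L) • z by abel, norm_smul, Real.norm_eq_abs, ← hLdef,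
        abs_of_nonneg (by positivity)]
      field_simp
    · rw [show Z₁ + (t/L) • z - Z₂ = (t/L - 1) • z by rw [hzdef]; module,
        norm_smul, Real.norm_eq_abs, ← hLdef,
        show t/L - 1 = (t - L)/L by field_simp, abs_div, abs_of_pos hL,
        div_mul_cancel₀ _ hL.ne']
  have hinj : ∀ sI : Set ℝ, Set.InjOn (fun t : ℝ => Z₁ + (t/L) • z) sI := by
    intro sI x hx y hy hxy
    simp only at hxy
    have h8 : (x/L) • z = (y/L) • z := by
      have := hxy
      exact add_left_cancel this
    have h9 : (x/L - y/L) • z = 0 := by rw [sub_smul, h8, sub_self]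
    rcases smul_eq_zero.mp h9 with h10 | h10
    · have : x / L = y / L := by linarith [sub_eq_zero.mp h10]
      field_simp at this
      exact this
    · exact absurd h10 hzne
  have key3 : (d₁ + d₂ < L ∨ L < d₁ - d₂) → X.Infinite := by
    intro hc
    rcases hc with hc | hc
    · have hlow : ∀ V, L - d₁ - d₂ ≤ O V := by
        intro V
        have htri : L ≤ ‖V - Z₁‖ + ‖V - Z₂‖ := by
          rw [hLdef, hzdef, show Z₂ - Z₁ = (V - Z₁) - (V - Z₂) by abel]
          exact norm_sub_le _ _
        rw [hO]
        have hh1 := le_abs_self (‖V - Z₁‖ - d₁)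
        have hh2 := le_abs_self (‖V - Z₂‖ - d₂)
        linarith
      have hsub : (fun t : ℝ => Z₁ + (t/L) • z) '' (Set.Icc d₁ (L - d₂)) ⊆ X := by
        rintro _ ⟨t, ht, rfl⟩
        rw [hX]; intro V
        obtain ⟨ha1, ha2⟩ := hfam t (le_trans hd₁ ht.1)
        rw [hO, ha1, ha2, abs_of_nonneg (by linarith [ht.1] : (0:ℝ) ≤ t - d₁),
          show |t - L| = L - t by rw [abs_of_nonpos (by linarith [ht.2]), neg_sub],
          abs_of_nonneg (by linarith [ht.2] : (0:ℝ) ≤ L - t - d₂)]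
        calc t - d₁ + (L - t - d₂) = L - d₁ - d₂ := by ring
        _ ≤ O V := hlow V
      exact Set.Infinite.mono hsub ((Set.Icc_infinite (by linarith)).image (hinj _))
    · have hlow : ∀ V, d₁ - d₂ - L ≤ O V := by
        intro V
        have htri : ‖V - Z₁‖ ≤ ‖V - Z₂‖ + L := by
          rw [show V - Z₁ = (V - Z₂) + z by rw [hzdef]; abel, hLdef]
          exact norm_add_le _ _
        rw [hO]
        have hh1 := neg_abs_le (‖V - Z₁‖ - d₁)
        have hh2 := le_abs_self (‖V - Z₂‖ - d₂)
        linarith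
      have hsub : (fun t : ℝ => Z₁ + (t/L) • z) '' (Set.Icc (L + d₂) d₁) ⊆ X := by
        rintro _ ⟨t, ht, rfl⟩
        rw [hX]; intro V
        obtain ⟨ha1, ha2⟩ := hfam t (by linarith [ht.1])
        rw [hO, ha1, ha2,
          show |t - d₁| = d₁ - t by rw [abs_of_nonpos (by linarith [ht.2]), neg_sub],
          abs_of_nonneg (by linarith [ht.1] : (0:ℝ) ≤ t - L),
          abs_of_nonneg (by linarith [ht.1] : (0:ℝ) ≤ t - L - d₂)]
        calc d₁ - t + (t - L - d₂) = d₁ - d₂ - L := by ring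
        _ ≤ O V := hlow V
      exact Set.Infinite.mono hsub ((Set.Icc_infinite (by linarith)).image (hinj _))
  -- assembling
  have tri : (L = d₁ + d₂ ∨ L = d₁ - d₂) ∨ (d₁ - d₂ < L ∧ L < d₁ + d₂) ∨
      (d₁ + d₂ < L ∨ L < d₁ - d₂) := by
    rcases lt_trichotomy L (d₁ + d₂) with h | h | h
    · rcases lt_trichotomy L (d₁ - d₂) with h' | h' | h'
      · exact Or.inr (Or.inr (Or.inr h'))
      · exact Or.inl (Or.inr h')
      · exact Or.inr (Or.inl ⟨h', h⟩)
    · exact Or.inl (Or.inl h)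
    · exact Or.inr (Or.inr (Or.inl h))
  refine ⟨⟨?_, key1⟩, ⟨?_, key2⟩, ⟨?_, key3⟩⟩
  · intro h
    rcases tri with hA | hB | hC
    · exact hA
    · rw [key2 hB] at h; exact absurd h (by norm_num)
    · rw [(key3 hC).encard_eq] at h; exact absurd h (by norm_num)
  · intro h
    rcases tri with hA | hB | hC
    · rw [key1 hA] at h; exact absurd h (by norm_num)
    · exact hB
    · rw [(key3 hC).encard_eq] at h; exact absurd h (by norm_num)
  · intro h
    rcases tri with hA | hB | hC
    · have := key1 hA; rw [h.encard_eq] at this; exact absurd this (by norm_num)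
    · have := key2 hB; rw [h.encard_eq] at this; exact absurd this (by norm_num)
    · exact hC
end

section
/- Let Z_1, Z_2, Z_3 ∈ ℝ³ be non-collinear and let d_1, d_2, d_3 ≥ 0. Let D_i = {W ∈ ℝ³ : ‖W − Z_i‖ ≤ d_i} be the closed measurement balls and let R_{100} be the closure of D_1 \ (D_2 ∪ D_3). If R_{100} is nonempty, then R_{100} is a connected subset of ℝ³. -/
/-!
Translate the centre of `D₁` to the origin and pick orthonormal `u, n` with `n ⊥ Z₂, Z₃` and
`⟪u, Zᵢ⟫ ≤ 0`; the third dimension is what leaves room for `n`. A point `w` of `D₁` stays outside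
`Dᵢ` as long as `‖w‖` does not decrease and `⟪w, Zᵢ⟫` does not increase. Moving only in the
`(u, n)`-plane through `w`, this lets every point of the region be pushed out to the sphere `∂D₁`
and slid towards `u`, ending at the lift `x + √(d₁² - ‖x‖²) u` of its projection `x ⊥ u, n`.
Over the disc `x ⊥ u`, the squared distance from the lift to `Zᵢ` is affine in `x` plus a
nonnegative multiple of the concave `√(d₁² - ‖x‖²)`, so the distance is concave and the points `x`
whose lift lies in the region form a convex set. Its image is therefore a path-connected subset of
the region that every point of the region can reach, and connectedness passes to the closure.
-/

open Metric Set Module Submodule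
open scoped RealInnerProductSpace

theorem ConcaveOn.sqrt {E : Type*} [AddCommGroup E] [Module ℝ E] {s : Set E} {f : E → ℝ}
    (hf : ConcaveOn ℝ s f) (hf₀ : ∀ x ∈ s, 0 ≤ f x) : ConcaveOn ℝ s fun x => √(f x) := by
  refine ⟨hf.1, fun x hx y hy a b ha hb hab => ?_⟩
  calc a • √(f x) + b • √(f y) ≤ √(a • f x + b • f y) :=
        Real.strictConcaveOn_sqrt.concaveOn.2 (hf₀ x hx) (hf₀ y hy) ha hb hab
    _ ≤ √(f (a • x + b • y)) := Real.sqrt_le_sqrt (hf.2 hx hy ha hb hab)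

section

variable {E : Type*} [NormedAddCommGroup E]

def ballDiffBalls (R : ℝ) (a : E) (ra : ℝ) (b : E) (rb : ℝ) : Set E :=
  closedBall 0 R \ (closedBall a ra ∪ closedBall b rb)

lemma mem_ballDiffBalls {R ra rb : ℝ} {a b w : E} :
    w ∈ ballDiffBalls R a ra b rb ↔ ‖w‖ ≤ R ∧ ra < dist w a ∧ rb < dist w b := by
  simp [ballDiffBalls]

lemma closedBall_diff_eq_image_ballDiffBalls {R ra rb : ℝ} {a b c : E} :
    closedBall c R \ (closedBall a ra ∪ closedBall b rb) =
      (c + ·) '' ballDiffBalls R (a - c) ra (b - c) rb := by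
  rw [ballDiffBalls, image_add_left, preimage_sdiff, preimage_union, preimage_add_closedBall,
    preimage_add_closedBall, preimage_add_closedBall]
  simp only [sub_neg_eq_add, zero_add, sub_add_cancel]

variable [InnerProductSpace ℝ E]

lemma dist_le_dist_of_norm_le_of_inner_le {w w' c : E} (hnorm : ‖w‖ ≤ ‖w'‖)
    (hinner : ⟪w', c⟫ ≤ ⟪w, c⟫) : dist w c ≤ dist w' c := by
  rw [dist_eq_norm, dist_eq_norm, ← sq_le_sq₀ (norm_nonneg _) (norm_nonneg _),
    norm_sub_sq_real, norm_sub_sq_real]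
  nlinarith [norm_nonneg w]

lemma exists_norm_eq_one_inner_eq_zero (hE : 2 < finrank ℝ E) (a b : E) :
    ∃ v : E, ‖v‖ = 1 ∧ ⟪v, a⟫ = 0 ∧ ⟪v, b⟫ = 0 := by
  have : FiniteDimensional ℝ E := Module.finite_of_finrank_pos (by omega)
  set K := span ℝ (range ![a, b])
  have hK : Kᗮ ≠ ⊥ := by
    intro h
    have h₁ := K.finrank_add_finrank_orthogonal
    have h₂ : finrank ℝ K ≤ 2 := (finrank_range_le_card (R := ℝ) ![a, b]).trans (by simp)
    rw [h, finrank_bot] at h₁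
    omega
  obtain ⟨v, hvK, hv⟩ := exists_mem_ne_zero_of_ne_bot hK
  have horth : ∀ c ∈ range ![a, b], ⟪‖v‖⁻¹ • v, c⟫ = 0 := fun c hc => by
    rw [real_inner_smul_left, real_inner_comm,
      inner_right_of_mem_orthogonal (subset_span hc) hvK, mul_zero]
  exact ⟨‖v‖⁻¹ • v, norm_smul_inv_norm hv, horth a ⟨0, rfl⟩, horth b ⟨1, rfl⟩⟩

lemma exists_orthonormal_inner_nonpos_inner_eq_zero (hE : 2 < finrank ℝ E) (a b : E) :
    ∃ u n : E, ‖u‖ = 1 ∧ ‖n‖ = 1 ∧ ⟪u, n⟫ = 0 ∧ ⟪u, a⟫ ≤ 0 ∧ ⟪u, b⟫ ≤ 0 ∧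
      ⟪n, a⟫ = 0 ∧ ⟪n, b⟫ = 0 := by
  obtain ⟨n, hn, hna, hnb⟩ := exists_norm_eq_one_inner_eq_zero hE a b
  obtain ⟨v, hv, hva, hvn⟩ := exists_norm_eq_one_inner_eq_zero hE a n
  rcases le_total ⟪v, b⟫ 0 with hvb | hvb
  · exact ⟨v, n, hv, hn, hvn, hva.le, hvb, hna, hnb⟩
  · refine ⟨-v, n, by rwa [norm_neg], hn, ?_, ?_, ?_, hna, hnb⟩ <;>
      simp only [inner_neg_left] <;> linarith

variable {R ra rb : ℝ} {a b u n : E}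

lemma mem_ballDiffBalls_of_norm_le_of_inner_le {w w' : E} (hw : w ∈ ballDiffBalls R a ra b rb)
    (hw'R : ‖w'‖ ≤ R) (hnorm : ‖w‖ ≤ ‖w'‖) (ha : ⟪w', a⟫ ≤ ⟪w, a⟫) (hb : ⟪w', b⟫ ≤ ⟪w, b⟫) :
    w' ∈ ballDiffBalls R a ra b rb := by
  rw [mem_ballDiffBalls] at hw ⊢
  exact ⟨hw'R, hw.2.1.trans_le (dist_le_dist_of_norm_le_of_inner_le hnorm ha),
    hw.2.2.trans_le (dist_le_dist_of_norm_le_of_inner_le hnorm hb)⟩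

lemma joinedIn_ballDiffBalls_of_norm_le_of_inner_le {γ : ℝ → E} (hγ : Continuous γ)
    (h₀ : γ 0 ∈ ballDiffBalls R a ra b rb)
    (h : ∀ t ∈ Icc (0 : ℝ) 1, ‖γ t‖ ≤ R ∧ ‖γ 0‖ ≤ ‖γ t‖ ∧ ⟪γ t, a⟫ ≤ ⟪γ 0, a⟫ ∧
      ⟪γ t, b⟫ ≤ ⟪γ 0, b⟫) :
    JoinedIn (ballDiffBalls R a ra b rb) (γ 0) (γ 1) := by
  refine JoinedIn.ofLine hγ.continuousOn rfl rfl ?_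
  rintro _ ⟨t, ht, rfl⟩
  obtain ⟨hR, hnorm, ha, hb⟩ := h t ht
  exact mem_ballDiffBalls_of_norm_le_of_inner_le h₀ hR hnorm ha hb

lemma norm_add_smul_add_smul_sq {x : E} (hu : ‖u‖ = 1) (hn : ‖n‖ = 1) (hun : ⟪u, n⟫ = 0)
    (hux : ⟪u, x⟫ = 0) (hnx : ⟪n, x⟫ = 0) (y z : ℝ) :
    ‖x + y • u + z • n‖ ^ 2 = ‖x‖ ^ 2 + y ^ 2 + z ^ 2 := by
  have hxu : ⟪x, u⟫ = 0 := by rw [real_inner_comm, hux]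
  have hxn : ⟪x, n⟫ = 0 := by rw [real_inner_comm, hnx]
  rw [norm_add_sq_real, norm_add_sq_real, norm_smul, norm_smul, hu, hn, Real.norm_eq_abs,
    Real.norm_eq_abs, mul_one, mul_one, sq_abs, sq_abs]
  simp only [inner_add_left, real_inner_smul_left, real_inner_smul_right, hxu, hxn, hun]
  ring

noncomputable def liftToSphere (R : ℝ) (u x : E) : E := x + √(R ^ 2 - ‖x‖ ^ 2) • u

lemma joinedIn_liftToSphere_of_nonneg {x : E} {y z : ℝ} (hu : ‖u‖ = 1) (hn : ‖n‖ = 1)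
    (hun : ⟪u, n⟫ = 0) (hua : ⟪u, a⟫ ≤ 0) (hub : ⟪u, b⟫ ≤ 0) (hna : ⟪n, a⟫ = 0)
    (hnb : ⟪n, b⟫ = 0) (hux : ⟪u, x⟫ = 0) (hnx : ⟪n, x⟫ = 0) (hz : 0 ≤ z)
    (hw : x + y • u + z • n ∈ ballDiffBalls R a ra b rb) :
    JoinedIn (ballDiffBalls R a ra b rb) (x + y • u + z • n) (liftToSphere R u x) := by
  have hR : 0 ≤ R := (norm_nonneg _).trans (mem_ballDiffBalls.1 hw).1
  have hwR : ‖x‖ ^ 2 + y ^ 2 + z ^ 2 ≤ R ^ 2 := by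
    rw [← norm_add_smul_add_smul_sq hu hn hun hux hnx]
    exact pow_le_pow_left₀ (norm_nonneg _) (mem_ballDiffBalls.1 hw).1 2
  set p := √(R ^ 2 - ‖x‖ ^ 2) with hp_def
  have hp : p ^ 2 = R ^ 2 - ‖x‖ ^ 2 := Real.sq_sqrt (by nlinarith)
  have hyp : y ≤ p := by nlinarith [Real.sqrt_nonneg (R ^ 2 - ‖x‖ ^ 2)]
  -- `y` rises to `p` and `y ^ 2 + z ^ 2` grows linearly to `p ^ 2`; convexity of squaring gives
  -- `yt t ^ 2 ≤ N t`, so the `n`-coordinate `√(N t - yt t ^ 2)` keeps the norm equal to `N t`.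
  set yt : ℝ → ℝ := fun t => y + t * (p - y)
  set N : ℝ → ℝ := fun t => y ^ 2 + z ^ 2 + t * (p ^ 2 - y ^ 2 - z ^ 2)
  set γ : ℝ → E := fun t => x + yt t • u + √(N t - yt t ^ 2) • n
  have hγ₀ : γ 0 = x + y • u + z • n := by simp [γ, yt, N, Real.sqrt_sq hz]
  have hγ₁ : γ 1 = liftToSphere R u x := by simp [γ, yt, N, liftToSphere, hp_def]
  have hN : ∀ t ∈ Icc (0 : ℝ) 1, yt t ^ 2 ≤ N t := fun t ⟨ht₀, ht₁⟩ => by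
    nlinarith [mul_nonneg ht₀ (sub_nonneg.2 ht₁), sq_nonneg (y - p), sq_nonneg z]
  have hnorm : ∀ t ∈ Icc (0 : ℝ) 1, ‖γ t‖ ^ 2 = ‖x‖ ^ 2 + N t := fun t ht => by
    rw [norm_add_smul_add_smul_sq hu hn hun hux hnx, Real.sq_sqrt (sub_nonneg.2 (hN t ht))]
    ring
  have hinner : ∀ t c, ⟪γ t, c⟫ = ⟪x, c⟫ + yt t * ⟪u, c⟫ + √(N t - yt t ^ 2) * ⟪n, c⟫ :=
    fun t c => by simp only [γ, inner_add_left, real_inner_smul_left]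
  rw [← hγ₀, ← hγ₁]
  refine joinedIn_ballDiffBalls_of_norm_le_of_inner_le (by fun_prop) (hγ₀ ▸ hw) fun t ht => ?_
  have hyt : y ≤ yt t := le_add_of_nonneg_right (mul_nonneg ht.1 (sub_nonneg.2 hyp))
  refine ⟨?_, ?_, ?_, ?_⟩
  · rw [← pow_le_pow_iff_left₀ (norm_nonneg _) hR two_ne_zero, hnorm t ht]
    nlinarith [ht.1, ht.2]
  · rw [← pow_le_pow_iff_left₀ (norm_nonneg _) (norm_nonneg _) two_ne_zero, hnorm t ht,
      hnorm 0 ⟨le_rfl, zero_le_one⟩]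
    nlinarith [ht.1]
  · rw [hinner, hinner, hna]
    nlinarith
  · rw [hinner, hinner, hnb]
    nlinarith

lemma exists_joinedIn_liftToSphere {w : E} (hu : ‖u‖ = 1) (hn : ‖n‖ = 1) (hun : ⟪u, n⟫ = 0)
    (hua : ⟪u, a⟫ ≤ 0) (hub : ⟪u, b⟫ ≤ 0) (hna : ⟪n, a⟫ = 0) (hnb : ⟪n, b⟫ = 0)
    (hw : w ∈ ballDiffBalls R a ra b rb) :
    ∃ x ∈ ((ℝ ∙ u)ᗮ : Set E) ∩ closedBall 0 R,
      JoinedIn (ballDiffBalls R a ra b rb) w (liftToSphere R u x) := by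
  set x := w - ⟪u, w⟫ • u - ⟪n, w⟫ • n
  have hux : ⟪u, x⟫ = 0 := by
    simp only [x, inner_sub_right, real_inner_smul_right, real_inner_self_eq_norm_sq, hu, hun]
    ring
  have hnx : ⟪n, x⟫ = 0 := by
    simp only [x, inner_sub_right, real_inner_smul_right, real_inner_self_eq_norm_sq, hn,
      real_inner_comm u n, hun]
    ring
  have hwx : w = x + ⟪u, w⟫ • u + ⟪n, w⟫ • n := by simp only [x]; abel
  have hxR : ‖x‖ ≤ R := by
    refine le_trans ?_ (mem_ballDiffBalls.1 hw).1
    rw [← pow_le_pow_iff_left₀ (norm_nonneg _) (norm_nonneg _) two_ne_zero, hwx,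
      norm_add_smul_add_smul_sq hu hn hun hux hnx]
    nlinarith
  refine ⟨x, ⟨mem_orthogonal_singleton_iff_inner_right.2 hux, mem_closedBall_zero_iff.2 hxR⟩, ?_⟩
  rcases le_total 0 ⟪n, w⟫ with hnw | hnw
  · rw [hwx] at hw ⊢
    exact joinedIn_liftToSphere_of_nonneg hu hn hun hua hub hna hnb hux hnx hnw hw
  · have hwx' : w = x + ⟪u, w⟫ • u + (-⟪n, w⟫) • -n := by rw [neg_smul_neg]; exact hwx
    rw [hwx'] at hw ⊢
    exact joinedIn_liftToSphere_of_nonneg (n := -n) hu (by rwa [norm_neg])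
      (by rw [inner_neg_right, hun, neg_zero]) hua hub (by rw [inner_neg_left, hna, neg_zero])
      (by rw [inner_neg_left, hnb, neg_zero]) hux (by rw [inner_neg_left, hnx, neg_zero])
      (neg_nonneg.2 hnw) hw

lemma norm_liftToSphere {x : E} (hu : ‖u‖ = 1) (hux : ⟪u, x⟫ = 0) (hxR : ‖x‖ ≤ R) :
    ‖liftToSphere R u x‖ = R := by
  have hR : 0 ≤ R := (norm_nonneg x).trans hxR
  rw [← sq_eq_sq₀ (norm_nonneg _) hR, liftToSphere, norm_add_sq_real, norm_smul, hu, mul_one,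
    Real.norm_eq_abs, sq_abs, real_inner_smul_right, real_inner_comm, hux,
    Real.sq_sqrt (sub_nonneg.2 (pow_le_pow_left₀ (norm_nonneg x) hxR 2))]
  ring

lemma dist_liftToSphere_sq {x : E} (hu : ‖u‖ = 1) (hux : ⟪u, x⟫ = 0) (hxR : ‖x‖ ≤ R) (c : E) :
    dist (liftToSphere R u x) c ^ 2 =
      R ^ 2 + ‖c‖ ^ 2 - 2 * ⟪x, c⟫ - 2 * ⟪u, c⟫ * √(R ^ 2 - ‖x‖ ^ 2) := by
  rw [dist_eq_norm, norm_sub_sq_real, norm_liftToSphere hu hux hxR, liftToSphere, inner_add_left,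
    real_inner_smul_left]
  ring

lemma concaveOn_dist_liftToSphere {c : E} (hu : ‖u‖ = 1) (huc : ⟪u, c⟫ ≤ 0) :
    ConcaveOn ℝ (((ℝ ∙ u)ᗮ : Set E) ∩ closedBall 0 R) fun x => dist (liftToSphere R u x) c := by
  set K : Set E := ((ℝ ∙ u)ᗮ : Set E) ∩ closedBall 0 R
  have hK : Convex ℝ K := (Submodule.convex _).inter (convex_closedBall 0 R)
  have hmem : ∀ x ∈ K, ⟪u, x⟫ = 0 ∧ ‖x‖ ≤ R := fun x hx =>
    ⟨mem_orthogonal_singleton_iff_inner_right.1 hx.1, mem_closedBall_zero_iff.1 hx.2⟩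
  have hsqrt : ConcaveOn ℝ K fun x => √(R ^ 2 - ‖x‖ ^ 2) :=
    ((concaveOn_const (R ^ 2) hK).sub ((convexOn_norm hK).pow (fun _ _ => norm_nonneg _) 2)).sqrt
      fun x hx => sub_nonneg.2 (pow_le_pow_left₀ (norm_nonneg x) (hmem x hx).2 2)
  have hsq : ConcaveOn ℝ K fun x => dist (liftToSphere R u x) c ^ 2 := by
    refine ((((hsqrt.smul (by linarith : 0 ≤ -2 * ⟪u, c⟫)).add_const (R ^ 2 + ‖c‖ ^ 2)).sub
      (LinearMap.convexOn ((2 : ℝ) • innerₛₗ ℝ c) hK))).congr fun x hx => ?_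
    rw [dist_liftToSphere_sq hu (hmem x hx).1 (hmem x hx).2]
    simp only [smul_eq_mul, LinearMap.coe_smul, coe_innerₛₗ_apply, Pi.sub_apply, Pi.add_apply,
      Pi.smul_apply, real_inner_comm]
    ring
  exact (hsq.sqrt fun x _ => sq_nonneg _).congr fun x _ => Real.sqrt_sq dist_nonneg

lemma convex_setOf_liftToSphere_mem (hu : ‖u‖ = 1) (hua : ⟪u, a⟫ ≤ 0) (hub : ⟪u, b⟫ ≤ 0) :
    Convex ℝ {x ∈ ((ℝ ∙ u)ᗮ : Set E) ∩ closedBall 0 R |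
      liftToSphere R u x ∈ ballDiffBalls R a ra b rb} := by
  convert ((concaveOn_dist_liftToSphere hu hua).convex_gt ra).inter
    ((concaveOn_dist_liftToSphere hu hub).convex_gt rb) using 1
  ext x
  simp only [mem_inter_iff, mem_ballDiffBalls]
  constructor
  · rintro ⟨hx, -, ha, hb⟩
    exact ⟨⟨hx, ha⟩, hx, hb⟩
  · rintro ⟨⟨hx, ha⟩, -, hb⟩
    exact ⟨hx, (norm_liftToSphere hu (mem_orthogonal_singleton_iff_inner_right.1 hx.1)
      (mem_closedBall_zero_iff.1 hx.2)).le, ha, hb⟩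

theorem isPathConnected_ballDiffBalls (hE : 2 < finrank ℝ E)
    (hne : (ballDiffBalls R a ra b rb).Nonempty) : IsPathConnected (ballDiffBalls R a ra b rb) := by
  obtain ⟨u, n, hu, hn, hun, hua, hub, hna, hnb⟩ := exists_orthonormal_inner_nonpos_inner_eq_zero hE a b
  set S := ballDiffBalls R a ra b rb
  set B := {x ∈ ((ℝ ∙ u)ᗮ : Set E) ∩ closedBall 0 R | liftToSphere R u x ∈ S}
  have hjoin : ∀ w ∈ S, ∃ x ∈ B, JoinedIn S w (liftToSphere R u x) := fun w hw => by
    obtain ⟨x, hx, hwx⟩ := exists_joinedIn_liftToSphere hu hn hun hua hub hna hnb hw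
    exact ⟨x, ⟨hx, hwx.mem.2⟩, hwx⟩
  obtain ⟨w₀, hw₀⟩ := hne
  obtain ⟨x₀, hx₀, hw₀x₀⟩ := hjoin w₀ hw₀
  have hB : IsPathConnected (liftToSphere R u '' B) :=
    ((convex_setOf_liftToSphere_mem hu hua hub).isPathConnected ⟨x₀, hx₀⟩).image
      (by unfold liftToSphere; fun_prop)
  refine ⟨w₀, hw₀, fun w hw => ?_⟩
  obtain ⟨x, hx, hwx⟩ := hjoin w hw
  refine hw₀x₀.trans (((hB.joinedIn _ (mem_image_of_mem _ hx₀) _ (mem_image_of_mem _ hx)).mono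
    ?_).trans hwx.symm)
  rintro _ ⟨y, hy, rfl⟩
  exact hy.2

theorem isPathConnected_closedBall_diff (hE : 2 < finrank ℝ E) {c : E}
    (hne : (closedBall c R \ (closedBall a ra ∪ closedBall b rb)).Nonempty) :
    IsPathConnected (closedBall c R \ (closedBall a ra ∪ closedBall b rb)) := by
  rw [closedBall_diff_eq_image_ballDiffBalls] at hne ⊢
  exact (isPathConnected_ballDiffBalls hE hne.of_image).image (continuous_const.add continuous_id)

end

theorem R100_connected_3D_general
    (Z₁ Z₂ Z₃ : EuclideanSpace ℝ (Fin 3))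
    (d₁ d₂ d₃ : ℝ)
    (R₁₀₀ : Set (EuclideanSpace ℝ (Fin 3)))
    (hR : R₁₀₀ = closure
        (Metric.closedBall Z₁ d₁ \ (Metric.closedBall Z₂ d₂ ∪ Metric.closedBall Z₃ d₃)))
    (hne : R₁₀₀.Nonempty) :
    IsConnected R₁₀₀ := by
  rw [hR] at hne ⊢
  refine (isPathConnected_closedBall_diff ?_ (closure_nonempty_iff.1 hne)).isConnected.closure
  rw [finrank_euclideanSpace_fin]
  norm_num

/-- If `Z₁, Z₂, Z₃ ∈ ℝ³` are non-collinear, `d₁, d₂, d₃ ≥ 0`, `Dᵢ` is the closed ball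
of radius `dᵢ` centered at `Zᵢ`, and `R₁₀₀` is the closure of `D₁ \ (D₂ ∪ D₃)`, then
`R₁₀₀` is connected whenever it is nonempty. -/
theorem R100_connected_3D
    (Z₁ Z₂ Z₃ : EuclideanSpace ℝ (Fin 3))
    (hZ : ¬ Collinear ℝ ({Z₁, Z₂, Z₃} : Set (EuclideanSpace ℝ (Fin 3))))
    (d₁ d₂ d₃ : ℝ) (hd₁ : 0 ≤ d₁) (hd₂ : 0 ≤ d₂) (hd₃ : 0 ≤ d₃)
    (R₁₀₀ : Set (EuclideanSpace ℝ (Fin 3)))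
    (hR : R₁₀₀ = closure
        (Metric.closedBall Z₁ d₁ \ (Metric.closedBall Z₂ d₂ ∪ Metric.closedBall Z₃ d₃)))
    (hne : R₁₀₀.Nonempty) :
    IsConnected R₁₀₀ :=
  R100_connected_3D_general Z₁ Z₂ Z₃ d₁ d₂ d₃ R₁₀₀ hR hne
end
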